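/- arXiv:1209.3572 — 6 statements merged into one kernel-verified Lean document; each statement's English description precedes it below -/
import Mathlib

section
/- Let T be a quasi-binary tree with at least two vertices and total weight ω(T) > 0, let k ≥ 2 be an integer with k ≤ |V(T)| − 1, and let γ ∈ ℝ with γ ≥ ω₃. If ω(T) ≥ max{ ((2k−1)/2)·ω₁ − (1/2)·γ , (2k−1)·ω₂ − k·γ }, then β_k(T) ≥ (ω(T) − (k−1)γ)/(2k−1). -/
open scoped Classical

/-- The weight of a connected component `c` of a graph `G`: the sum of the
vertex weights over the vertices belonging to `c`. -/
noncomputable def compWeight {V : Type*} [Fintype V] (G : SimpleGraph V)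
    (ω : V → ℝ) (c : G.ConnectedComponent) : ℝ :=
  ∑ v ∈ Finset.univ.filter (fun v => G.connectedComponentMk v = c), ω v

namespace BetaK
variable {V : Type*} (G : SimpleGraph V)

def amb (A : Finset V) : SimpleGraph V where
  Adj u v := G.Adj u v ∧ u ∈ A ∧ v ∈ A
  symm := ⟨fun u v ⟨h, hu, hv⟩ => ⟨h.symm, hv, hu⟩⟩
  loopless := ⟨fun u ⟨h, _⟩ => G.irrefl h⟩

lemma amb_adj {A : Finset V} {u v : V} :
    (amb G A).Adj u v ↔ G.Adj u v ∧ u ∈ A ∧ v ∈ A := Iff.rfl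

lemma amb_le (A : Finset V) : amb G A ≤ G := fun _ _ h => h.1

lemma amb_mono {A B : Finset V} (h : A ⊆ B) : amb G A ≤ amb G B :=
  fun _ _ ⟨ha, hu, hv⟩ => ⟨ha, h hu, h hv⟩

lemma amb_univ [Fintype V] : amb G Finset.univ = G := by
  ext u v; simp [amb_adj]

noncomputable def nbrs (A : Finset V) (b : V) : Finset V :=
  A.filter (fun c => (amb G A).Adj b c)

noncomputable def D (A : Finset V) (a b : V) : Finset V :=
  A.filter (fun v => ((amb G A).deleteEdges {s(a,b)}).Reachable b v)

def Pre (A : Finset V) : Prop := ∀ u ∈ A, ∀ v ∈ A, (amb G A).Reachable u v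

lemma mem_D {A : Finset V} {a b v : V} :
    v ∈ D G A a b ↔ v ∈ A ∧ ((amb G A).deleteEdges {s(a,b)}).Reachable b v := by
  simp [D]

lemma dele_mono {H1 H2 : SimpleGraph V} (h : H1 ≤ H2) (s : Set (Sym2 V)) :
    H1.deleteEdges s ≤ H2.deleteEdges s := by
  intro u v hv
  rw [SimpleGraph.deleteEdges_adj] at *
  exact ⟨h hv.1, hv.2⟩

lemma dele_anti (H : SimpleGraph V) {s t : Set (Sym2 V)} (h : s ⊆ t) :
    H.deleteEdges t ≤ H.deleteEdges s := by
  intro u v hv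
  rw [SimpleGraph.deleteEdges_adj] at *
  exact ⟨hv.1, fun hs => hv.2 (h hs)⟩

/-- walk split lemma -/
lemma reach_split {H : SimpleGraph V} (a b : V) {u v : V} (h : H.Reachable u v) :
    (H.deleteEdges {s(a,b)}).Reachable u v ∨
    ((H.deleteEdges {s(a,b)}).Reachable u a ∧ (H.deleteEdges {s(a,b)}).Reachable b v) ∨
    ((H.deleteEdges {s(a,b)}).Reachable u b ∧ (H.deleteEdges {s(a,b)}).Reachable a v) := by
  obtain ⟨w⟩ := h
  induction w with
  | nil => exact Or.inl (SimpleGraph.Reachable.refl _)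
  | @cons u x v hadj w ih =>
    by_cases he : s(u,x) = s(a,b)
    · rw [Sym2.eq_iff] at he
      rcases he with ⟨rfl, rfl⟩ | ⟨rfl, rfl⟩
      · -- u = a, x = b
        rcases ih with h1 | ⟨h2a, h2b⟩ | ⟨h3a, h3b⟩
        · exact Or.inr (Or.inl ⟨SimpleGraph.Reachable.refl _, h1⟩)
        · exact Or.inr (Or.inl ⟨SimpleGraph.Reachable.refl _, h2b⟩)
        · exact Or.inl h3b
      · -- u = b, x = a
        rcases ih with h1 | ⟨h2a, h2b⟩ | ⟨h3a, h3b⟩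
        · exact Or.inr (Or.inr ⟨SimpleGraph.Reachable.refl _, h1⟩)
        · exact Or.inl h2b
        · exact Or.inr (Or.inr ⟨SimpleGraph.Reachable.refl _, h3b⟩)
    · have hux : (H.deleteEdges {s(a,b)}).Adj u x := by
        rw [SimpleGraph.deleteEdges_adj]
        exact ⟨hadj, by simpa using he⟩
      rcases ih with h1 | ⟨h2a, h2b⟩ | ⟨h3a, h3b⟩
      · exact Or.inl (hux.reachable.trans h1)
      · exact Or.inr (Or.inl ⟨hux.reachable.trans h2a, h2b⟩)
      · exact Or.inr (Or.inr ⟨hux.reachable.trans h3a, h3b⟩)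

/-- reachability stays in closed set -/
lemma reach_closed {H : SimpleGraph V} {U : Set V}
    (hU : ∀ u x, u ∈ U → H.Adj u x → x ∈ U) {u v : V} (hu : u ∈ U)
    (h : H.Reachable u v) : v ∈ U := by
  obtain ⟨w⟩ := h
  induction w with
  | nil => exact hu
  | @cons u x v hadj w ih => exact ih (hU u x hu hadj)

/-- transfer reachability along a closed set -/
lemma reach_transfer {H1 H2 : SimpleGraph V} {U : Set V}
    (hU : ∀ u x, u ∈ U → H1.Adj u x → x ∈ U)
    (he : ∀ u x, u ∈ U → x ∈ U → H1.Adj u x → H2.Adj u x)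
    {u v : V} (hu : u ∈ U) (h : H1.Reachable u v) : H2.Reachable u v := by
  obtain ⟨w⟩ := h
  induction w with
  | nil => exact SimpleGraph.Reachable.refl _
  | @cons u x v hadj w ih =>
    have hx : x ∈ U := hU u x hu hadj
    exact ((he u x hu hx hadj).reachable).trans (ih hx)

lemma bridge {H : SimpleGraph V} (hle : H ≤ G) (hacyc : G.IsAcyclic) {a b : V}
    (hab : H.Adj a b) : ¬ (H.deleteEdges {s(a,b)}).Reachable a b := by
  intro hr
  have hGb : G.IsBridge s(a,b) :=
    (SimpleGraph.isAcyclic_iff_forall_adj_isBridge.mp hacyc) (hle hab)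
  rw [SimpleGraph.isBridge_iff] at hGb
  have h2 : (G.deleteEdges {s(a,b)}).Reachable a b := hr.mono (dele_mono hle _)
  exact hGb h2


variable {G}

lemma D_subset {A : Finset V} {a b : V} : D G A a b ⊆ A := Finset.filter_subset _ _

lemma self_mem_D {A : Finset V} {a b : V} (hab : (amb G A).Adj a b) : b ∈ D G A a b :=
  (mem_D G).mpr ⟨hab.2.2, SimpleGraph.Reachable.refl _⟩

lemma not_mem_D (hacyc : G.IsAcyclic) {A : Finset V} {a b : V}
    (hab : (amb G A).Adj a b) : a ∉ D G A a b := by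
  intro h
  exact bridge G (amb_le G A) hacyc hab (((mem_D G).mp h).2.symm)

lemma sym2_swap (a b : V) : s(b,a) = s(a,b) := Sym2.eq_swap

lemma D_disj (hacyc : G.IsAcyclic) {A : Finset V} {a b : V}
    (hab : (amb G A).Adj a b) {v : V}
    (h1 : v ∈ D G A a b) (h2 : v ∈ D G A b a) : False := by
  rw [mem_D] at h1 h2
  rw [sym2_swap] at h2
  exact bridge G (amb_le G A) hacyc hab (h2.2.trans h1.2.symm)

lemma D_closed {A : Finset V} {a b v x : V} (hv : v ∈ D G A a b)
    (hadj : ((amb G A).deleteEdges {s(a,b)}).Adj v x) : x ∈ D G A a b := by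
  rw [mem_D] at *
  exact ⟨hadj.1.2.2, hv.2.trans hadj.reachable⟩

lemma D_union (hacyc : G.IsAcyclic) {A : Finset V} (hconn : Pre G A) {a b : V}
    (hab : (amb G A).Adj a b) {v : V} (hv : v ∈ A) :
    v ∈ D G A a b ∨ v ∈ D G A b a := by
  have hr := hconn b hab.2.2 v hv
  rcases reach_split a b hr with h | ⟨h1, _⟩ | ⟨_, h2⟩
  · exact Or.inl ((mem_D G).mpr ⟨hv, h⟩)
  · exact absurd h1.symm (bridge G (amb_le G A) hacyc hab)
  · refine Or.inr ((mem_D G).mpr ⟨hv, ?_⟩)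
    rw [sym2_swap]; exact h2

lemma D_compl (hacyc : G.IsAcyclic) {A : Finset V} (hconn : Pre G A) {a b : V}
    (hab : (amb G A).Adj a b) : D G A a b = A \ D G A b a := by
  ext v
  rw [Finset.mem_sdiff]
  constructor
  · exact fun h => ⟨D_subset h, fun h2 => D_disj hacyc hab h h2⟩
  · rintro ⟨hv, h2⟩
    rcases D_union hacyc hconn hab hv with h | h
    · exact h
    · exact absurd h h2

lemma mem_nbrs {A : Finset V} {b c : V} :
    c ∈ nbrs G A b ↔ c ∈ A ∧ (amb G A).Adj b c := Finset.mem_filter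

lemma star_decomp {A : Finset V} (hconn : Pre G A) {b : V} (hb : b ∈ A) :
    A = insert b ((nbrs G A b).biUnion (fun c => D G A b c)) := by
  ext v
  constructor
  · intro hv
    have hr := hconn b hb v hv
    have hmem : b ∈ insert b ((nbrs G A b).biUnion (fun c => D G A b c)) :=
      Finset.mem_insert_self _ _
    refine reach_closed (U := (↑(insert b ((nbrs G A b).biUnion (fun c => D G A b c))) : Set V))
      ?_ (Finset.mem_coe.mpr hmem) hr
    intro u x hu hadj
    rw [Finset.mem_coe, Finset.mem_insert] at hu ⊢
    simp only [Finset.mem_biUnion] at hu ⊢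
    rcases hu with rfl | hu2
    · exact Or.inr ⟨x, (mem_nbrs).mpr ⟨hadj.2.2, hadj⟩,
        (mem_D G).mpr ⟨hadj.2.2, SimpleGraph.Reachable.refl _⟩⟩
    · obtain ⟨c, hc, huc⟩ := hu2
      have hcadj : (amb G A).Adj b c := ((mem_nbrs (G := G)).mp hc).2
      by_cases he : s(u,x) = s(b,c)
      · rw [Sym2.eq_iff] at he
        rcases he with ⟨rfl, rfl⟩ | ⟨rfl, rfl⟩
        · exact Or.inr ⟨_, hc, self_mem_D hcadj⟩
        · exact Or.inl rfl
      · refine Or.inr ⟨c, hc, D_closed huc ?_⟩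
        rw [SimpleGraph.deleteEdges_adj]
        exact ⟨hadj, by simpa using he⟩
  · intro hv
    rcases Finset.mem_insert.mp hv with rfl | hv
    · exact hb
    · obtain ⟨c, _, hvc⟩ := Finset.mem_biUnion.mp hv
      exact D_subset hvc

lemma child_disj (hacyc : G.IsAcyclic) {A : Finset V} {b c₁ c₂ : V}
    (h1 : (amb G A).Adj b c₁) (h2 : (amb G A).Adj b c₂) (hne : c₁ ≠ c₂) {v : V}
    (hv1 : v ∈ D G A b c₁) (hv2 : v ∈ D G A b c₂) : False := by
  rw [mem_D] at hv1 hv2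
  have hsplit := reach_split b c₁ hv2.2
  have hle1 : ((amb G A).deleteEdges {s(b,c₂)}).deleteEdges {s(b,c₁)} ≤
      (amb G A).deleteEdges {s(b,c₁)} := dele_mono (SimpleGraph.deleteEdges_le _) _
  have hle2 : ((amb G A).deleteEdges {s(b,c₂)}).deleteEdges {s(b,c₁)} ≤
      (amb G A).deleteEdges {s(b,c₂)} := SimpleGraph.deleteEdges_le _
  have hbc2 : ((amb G A).deleteEdges {s(b,c₁)}).Adj b c₂ := by
    rw [SimpleGraph.deleteEdges_adj]
    refine ⟨h2, ?_⟩
    simp only [Set.mem_singleton_iff, Sym2.eq_iff]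
    rintro (⟨-, rfl⟩ | ⟨rfl, -⟩)
    · exact hne rfl
    · exact h1.ne rfl
  rcases hsplit with h | ⟨ha, -⟩ | ⟨-, hb2⟩
  · have : ((amb G A).deleteEdges {s(b,c₁)}).Reachable b c₁ :=
      (hbc2.reachable.trans (h.mono hle1)).trans hv1.2.symm
    exact bridge G (amb_le G A) hacyc h1 this
  · exact bridge G (amb_le G A) hacyc h2 ((ha.mono hle2).symm)
  · exact bridge G (amb_le G A) hacyc h1 ((hb2.mono hle1).trans hv1.2.symm)

lemma edge_decomp (hacyc : G.IsAcyclic) {A : Finset V} (hconn : Pre G A) {a b : V}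
    (hab : (amb G A).Adj a b) :
    D G A a b = insert b (((nbrs G A b).erase a).biUnion (fun c => D G A b c)) := by
  have hanb : a ∈ nbrs G A b := (mem_nbrs).mpr ⟨hab.2.1, hab.symm⟩
  ext v
  rw [D_compl hacyc hconn hab, Finset.mem_sdiff]
  constructor
  · rintro ⟨hv, hnd⟩
    have hv' : v ∈ insert b ((nbrs G A b).biUnion (fun c => D G A b c)) := by
      rw [← star_decomp hconn hab.2.2]; exact hv
    rcases Finset.mem_insert.mp hv' with rfl | hv2
    · exact Finset.mem_insert_self _ _
    · obtain ⟨c, hc, hvc⟩ := Finset.mem_biUnion.mp hv2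
      refine Finset.mem_insert_of_mem (Finset.mem_biUnion.mpr ⟨c, ?_, hvc⟩)
      refine Finset.mem_erase.mpr ⟨?_, hc⟩
      rintro rfl
      exact hnd hvc
  · intro hv
    rcases Finset.mem_insert.mp hv with rfl | hv2
    · exact ⟨hab.2.2, fun h => not_mem_D hacyc hab.symm h⟩
    · obtain ⟨c, hc, hvc⟩ := Finset.mem_biUnion.mp hv2
      obtain ⟨hca, hcnb⟩ := Finset.mem_erase.mp hc
      refine ⟨D_subset hvc, fun h => ?_⟩
      exact child_disj hacyc ((mem_nbrs).mp hcnb).2 hab.symm hca hvc h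

lemma pre_D {A : Finset V} {a b : V} : Pre G (D G A a b) := by
  intro u hu v hv
  rw [mem_D] at hu hv
  have hr : ((amb G A).deleteEdges {s(a,b)}).Reachable u v := hu.2.symm.trans hv.2
  refine reach_transfer (U := (↑(D G A a b) : Set V)) ?_ ?_ ?_ hr
  · intro y x hy hadj
    exact D_closed hy hadj
  · intro y x hy hx hadj
    exact ⟨hadj.1.1, hy, hx⟩
  · rw [Finset.mem_coe, mem_D]; exact ⟨hu.1, hu.2⟩

lemma nbrs_mono {A' A : Finset V} (h : A' ⊆ A) (v : V) :
    nbrs G A' v ⊆ nbrs G A v := by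
  intro c hc
  rw [mem_nbrs] at *
  exact ⟨h hc.1, hc.2.1, h hc.2.2.1, h hc.2.2.2⟩

lemma child_subset (hacyc : G.IsAcyclic) {A : Finset V} (hconn : Pre G A) {a b c : V}
    (hab : (amb G A).Adj a b) (hc : c ∈ (nbrs G A b).erase a) :
    D G A b c ⊆ D G A a b := by
  rw [edge_decomp hacyc hconn hab]
  intro v hv
  exact Finset.mem_insert_of_mem (Finset.mem_biUnion.mpr ⟨c, hc, hv⟩)

lemma children_pd (hacyc : G.IsAcyclic) {A : Finset V} {b : V} {s : Finset V}
    (hs : s ⊆ nbrs G A b) : Set.PairwiseDisjoint (↑s) (fun c => D G A b c) := by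
  intro c₁ h1 c₂ h2 hne
  rw [Function.onFun, Finset.disjoint_left]
  intro v hv1 hv2
  exact child_disj hacyc ((mem_nbrs).mp (hs h1)).2 ((mem_nbrs).mp (hs h2)).2 hne hv1 hv2

lemma b_not_mem_children (hacyc : G.IsAcyclic) {A : Finset V} {b : V} {s : Finset V}
    (hs : s ⊆ nbrs G A b) : b ∉ s.biUnion (fun c => D G A b c) := by
  intro h
  obtain ⟨c, hc, hbc⟩ := Finset.mem_biUnion.mp h
  exact not_mem_D hacyc ((mem_nbrs).mp (hs hc)).2 hbc

lemma D_sum_decomp (hacyc : G.IsAcyclic) {A : Finset V} (hconn : Pre G A) {a b : V}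
    (hab : (amb G A).Adj a b) (f : V → ℝ) :
    ∑ v ∈ D G A a b, f v
      = f b + ∑ c ∈ (nbrs G A b).erase a, ∑ v ∈ D G A b c, f v := by
  rw [edge_decomp hacyc hconn hab,
    Finset.sum_insert (b_not_mem_children hacyc (Finset.erase_subset _ _)),
    Finset.sum_biUnion (children_pd hacyc (Finset.erase_subset _ _))]

lemma D_card_decomp (hacyc : G.IsAcyclic) {A : Finset V} (hconn : Pre G A) {a b : V}
    (hab : (amb G A).Adj a b) :
    (D G A a b).card
      = 1 + ∑ c ∈ (nbrs G A b).erase a, (D G A b c).card := by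
  rw [edge_decomp hacyc hconn hab,
    Finset.card_insert_of_notMem (b_not_mem_children hacyc (Finset.erase_subset _ _)),
    Finset.card_biUnion]
  · rw [add_comm]
  · intro c₁ h1 c₂ h2 hne
    rw [Function.onFun, Finset.disjoint_left]
    intro v hv1 hv2
    exact child_disj hacyc ((mem_nbrs).mp ((Finset.erase_subset _ _) h1)).2
      ((mem_nbrs).mp ((Finset.erase_subset _ _) h2)).2 hne hv1 hv2

lemma star_sum (hacyc : G.IsAcyclic) {A : Finset V} (hconn : Pre G A) {r : V}
    (hr : r ∈ A) (f : V → ℝ) :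
    ∑ v ∈ A, f v = f r + ∑ c ∈ nbrs G A r, ∑ v ∈ D G A r c, f v := by
  conv_lhs => rw [star_decomp hconn hr]
  rw [Finset.sum_insert (b_not_mem_children hacyc (le_refl _)),
    Finset.sum_biUnion (children_pd hacyc (le_refl _))]

lemma nbrs_nonempty {A : Finset V} (hconn : Pre G A) {r : V} (hr : r ∈ A)
    (h2 : 2 ≤ A.card) : (nbrs G A r).Nonempty := by
  obtain ⟨v, hv, hvr⟩ := Finset.exists_mem_ne (s := A) (by omega) r
  obtain ⟨w⟩ := hconn r hr v hv
  cases w with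
  | nil => exact absurd rfl hvr.symm
  | cons hadj p => exact ⟨_, (mem_nbrs).mpr ⟨hadj.2.2, hadj⟩⟩

lemma hub_erase (hacyc : G.IsAcyclic) {A : Finset V} (hconn : Pre G A) {a b : V}
    (hab : (amb G A).Adj a b) (ω : V → ℝ) (B γ : ℝ)
    (hdegb : (nbrs G A b).card ≤ 3)
    (hωEb : ω b ≤ 2*B+γ) (hω2b : 2 ≤ (nbrs G A b).card → ω b ≤ B+γ)
    (hω3b : (nbrs G A b).card = 3 → ω b ≤ γ)
    (hlt : ∀ c ∈ (nbrs G A b).erase a, (∑ v ∈ D G A b c, ω v) < B) :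
    (∑ v ∈ D G A a b, ω v) ≤ 2*B+γ ∧
    (B ≤ 0 → 1 ≤ ((nbrs G A b).erase a).card →
      (∑ v ∈ D G A a b, ω v) < 2*B+γ+B) := by
  have hanb : a ∈ nbrs G A b := (mem_nbrs).mpr ⟨hab.2.1, hab.symm⟩
  have hcard : ((nbrs G A b).erase a).card = (nbrs G A b).card - 1 :=
    Finset.card_erase_of_mem hanb
  have hdpos : 1 ≤ (nbrs G A b).card := Finset.card_pos.mpr ⟨a, hanb⟩
  have hsum := D_sum_decomp hacyc hconn hab ω
  have hkey : ∀ m : ℕ, ((nbrs G A b).erase a).card = m → 1 ≤ m →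
      (∑ c ∈ (nbrs G A b).erase a, ∑ v ∈ D G A b c, ω v) < (m : ℝ) * B := by
    intro m hmeq hm1
    have hne : ((nbrs G A b).erase a).Nonempty := by
      rw [← Finset.card_pos, hmeq]; omega
    calc (∑ c ∈ (nbrs G A b).erase a, ∑ v ∈ D G A b c, ω v)
        < ∑ _c ∈ (nbrs G A b).erase a, B := Finset.sum_lt_sum_of_nonempty hne hlt
      _ = (m : ℝ) * B := by rw [Finset.sum_const, hmeq, nsmul_eq_mul]
  rcases Nat.lt_or_ge ((nbrs G A b).erase a).card 1 with hm | hm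
  · -- m = 0
    have h0 : ((nbrs G A b).erase a) = ∅ := by
      rw [← Finset.card_eq_zero]; omega
    rw [h0] at hsum
    simp only [Finset.sum_empty, add_zero] at hsum
    refine ⟨by rw [hsum]; exact hωEb, fun _ h1 => by omega⟩
  · have hm2 : ((nbrs G A b).erase a).card ≤ 2 := by omega
    rcases Nat.eq_or_lt_of_le hm with hm1 | hm2'
    · -- m = 1, deg = 2
      have hdeg2 : 2 ≤ (nbrs G A b).card := by omega
      have hωb := hω2b hdeg2
      have hlt1 := hkey 1 hm1.symm (le_refl _)
      constructor
      · rw [hsum]; push_cast at hlt1; linarith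
      · intro hB _
        rw [hsum]; push_cast at hlt1; linarith
    · -- m = 2, deg = 3
      have hmeq : ((nbrs G A b).erase a).card = 2 := by omega
      have hdeg3 : (nbrs G A b).card = 3 := by omega
      have hωb := hω3b hdeg3
      have hlt2 := hkey 2 hmeq (by omega)
      constructor
      · rw [hsum]; push_cast at hlt2; linarith
      · intro hB _
        rw [hsum]; push_cast at hlt2; linarith

lemma hub_star (hacyc : G.IsAcyclic) {A : Finset V} (hconn : Pre G A) {r : V}
    (hr : r ∈ A) (ω : V → ℝ) (B γ : ℝ)
    (hdegr : (nbrs G A r).card ≤ 3) (hm : 1 ≤ (nbrs G A r).card)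
    (hωEr : ω r ≤ 2*B+γ) (hω2r : 2 ≤ (nbrs G A r).card → ω r ≤ B+γ)
    (hω3r : (nbrs G A r).card = 3 → ω r ≤ γ)
    (hlt : ∀ c ∈ nbrs G A r, (∑ v ∈ D G A r c, ω v) < B) :
    (∑ v ∈ A, ω v) < (2*B+γ) + B := by
  have hsum := star_sum hacyc hconn hr ω
  have hne : (nbrs G A r).Nonempty := Finset.card_pos.mp hm
  have hkey : (∑ c ∈ nbrs G A r, ∑ v ∈ D G A r c, ω v)
      < ((nbrs G A r).card : ℝ) * B := by
    calc (∑ c ∈ nbrs G A r, ∑ v ∈ D G A r c, ω v)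
        < ∑ _c ∈ nbrs G A r, B := Finset.sum_lt_sum_of_nonempty hne hlt
      _ = ((nbrs G A r).card : ℝ) * B := by rw [Finset.sum_const, nsmul_eq_mul]
  interval_cases hdc : (nbrs G A r).card
  · rw [hsum]; push_cast at hkey; linarith
  · rw [hsum]; push_cast at hkey
    have := hω2r (by omega); linarith
  · rw [hsum]; push_cast at hkey
    have := hω3r rfl; linarith

lemma cut_exists [Fintype V] (hacyc : G.IsAcyclic) (ω : V → ℝ) (B γ : ℝ) {A : Finset V}
    (hconn : Pre G A) {k : ℕ} (hk : 2 ≤ k) (hkn : k ≤ A.card)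
    (hdegA : ∀ v ∈ A, (nbrs G A v).card ≤ 3)
    (hωE : ∀ v ∈ A, ω v ≤ 2*B+γ)
    (hω2 : ∀ v ∈ A, 2 ≤ (nbrs G A v).card → ω v ≤ B+γ)
    (hω3 : ∀ v ∈ A, (nbrs G A v).card = 3 → ω v ≤ γ)
    (hE : 0 ≤ 2*B+γ)
    (hW : ((k:ℝ)-1)*(2*B+γ) + B ≤ ∑ v ∈ A, ω v) :
    ∃ a b, (amb G A).Adj a b ∧ B ≤ ∑ v ∈ D G A a b, ω v ∧
      (∑ v ∈ D G A a b, ω v) ≤ 2*B+γ ∧ (D G A a b).card + k ≤ A.card + 1 := by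
  have hA2 : 2 ≤ A.card := le_trans hk hkn
  obtain ⟨r, hr⟩ : A.Nonempty := Finset.card_pos.mp (by omega)
  have hkR : (2:ℝ) ≤ (k:ℝ) := by exact_mod_cast hk
  classical
  set Q : Finset (V × V) := (Finset.univ ×ˢ Finset.univ).filter
    (fun p => (amb G A).Adj p.1 p.2 ∧ r ∉ D G A p.1 p.2 ∧
      B ≤ ∑ v ∈ D G A p.1 p.2, ω v) with hQdef
  have hQmem : ∀ p : V × V, p ∈ Q ↔ ((amb G A).Adj p.1 p.2 ∧ r ∉ D G A p.1 p.2 ∧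
      B ≤ ∑ v ∈ D G A p.1 p.2, ω v) := by
    intro p
    rw [hQdef, Finset.mem_filter]
    simp [Finset.mem_product]
  have hQne : Q.Nonempty := by
    by_contra hQe
    rw [Finset.not_nonempty_iff_eq_empty] at hQe
    have hallmem : ∀ c ∈ nbrs G A r, (∑ v ∈ D G A r c, ω v) < B := by
      intro c hc
      by_contra hge
      push_neg at hge
      have hadj := ((mem_nbrs (G := G)).mp hc).2
      have : (r,c) ∈ Q := (hQmem (r,c)).mpr ⟨hadj, not_mem_D hacyc hadj, hge⟩
      rw [hQe] at this
      exact absurd this (Finset.notMem_empty _)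
    have hm1 : 1 ≤ (nbrs G A r).card :=
      Finset.card_pos.mpr (nbrs_nonempty hconn hr hA2)
    have hstar := hub_star hacyc hconn hr ω B γ (hdegA r hr) hm1 (hωE r hr)
      (hω2 r hr) (hω3 r hr) hallmem
    nlinarith [mul_nonneg (by linarith : (0:ℝ) ≤ (k:ℝ)-2) hE]
  have hchildlt : ∀ (S : Finset (V × V)), S ⊆ Q →
      ∀ a b, (a, b) ∈ S →
      (∀ p ∈ Q, (D G A p.1 p.2).card < (D G A a b).card → p ∈ S) →
      (∀ p ∈ S, (D G A a b).card ≤ (D G A p.1 p.2).card) →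
      ∀ c ∈ (nbrs G A b).erase a, (∑ v ∈ D G A b c, ω v) < B := by
    intro S hSQ a b hab hSin hmin c hc
    by_contra hge
    push_neg at hge
    have hadj : (amb G A).Adj a b := ((hQmem _).mp (hSQ hab)).1
    have hrD : r ∉ D G A a b := ((hQmem _).mp (hSQ hab)).2.1
    have hbc : (amb G A).Adj b c := ((mem_nbrs (G := G)).mp ((Finset.erase_subset _ _) hc)).2
    have hsub : D G A b c ⊆ D G A a b := child_subset hacyc hconn hadj hc
    have hss : D G A b c ⊂ D G A a b := by
      rw [Finset.ssubset_iff_of_subset hsub]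
      exact ⟨b, self_mem_D hadj, not_mem_D hacyc hbc⟩
    have hcardlt : (D G A b c).card < (D G A a b).card := Finset.card_lt_card hss
    have hQbc : (b, c) ∈ Q := (hQmem (b,c)).mpr ⟨hbc, fun h => hrD (hsub h), hge⟩
    have hSbc : (b, c) ∈ S := hSin _ hQbc hcardlt
    have hge2 := hmin _ hSbc
    simp only at hge2
    omega
  set P : Finset (V × V) := Q.filter
    (fun p => (D G A p.1 p.2).card + k ≤ A.card + 1) with hPdef
  rcases P.eq_empty_or_nonempty with hPe | hPne
  · -- P empty: derive a contradiction
    exfalso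
    obtain ⟨p, hpQ, hpmin⟩ := Q.exists_min_image (fun p => (D G A p.1 p.2).card) hQne
    obtain ⟨a, b⟩ := p
    have hadj : (amb G A).Adj a b := ((hQmem _).mp hpQ).1
    have hWD : B ≤ ∑ v ∈ D G A a b, ω v := ((hQmem _).mp hpQ).2.2
    have hchild := hchildlt Q (le_refl _) a b hpQ (fun p hp _ => hp) hpmin
    have hnP : ¬ ((D G A a b).card + k ≤ A.card + 1) := by
      intro hle
      have : (a,b) ∈ P := by
        rw [hPdef, Finset.mem_filter]
        exact ⟨hpQ, hle⟩
      rw [hPe] at this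
      exact absurd this (Finset.notMem_empty _)
    push_neg at hnP
    have hbA : b ∈ A := hadj.2.2
    have hub := hub_erase hacyc hconn hadj ω B γ (hdegA b hbA) (hωE b hbA)
      (hω2 b hbA) (hω3 b hbA) hchild
    -- the erase set is nonempty
    have hcard1 : 1 ≤ ((nbrs G A b).erase a).card := by
      by_contra h0
      push_neg at h0
      have h00 : ((nbrs G A b).erase a) = ∅ := by
        rw [← Finset.card_eq_zero]; omega
      have hD1 : (D G A a b).card = 1 := by
        rw [D_card_decomp hacyc hconn hadj, h00]
        simp
      omega
    -- complement bound
    have hDsub : D G A a b ⊆ A := D_subset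
    have hsplit : (∑ v ∈ A \ D G A a b, ω v) + (∑ v ∈ D G A a b, ω v) = ∑ v ∈ A, ω v :=
      Finset.sum_sdiff hDsub
    have hcompcard : (A \ D G A a b).card + (D G A a b).card = A.card := by
      rw [Finset.card_sdiff_of_subset hDsub]
      have := Finset.card_le_card hDsub
      omega
    have hcompw : (∑ v ∈ A \ D G A a b, ω v) ≤ ((A \ D G A a b).card : ℝ) * (2*B+γ) := by
      calc (∑ v ∈ A \ D G A a b, ω v) ≤ (A \ D G A a b).card • (2*B+γ) :=
            Finset.sum_le_card_nsmul _ _ _ (fun v hv => hωE v (Finset.mem_sdiff.mp hv).1)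
        _ = ((A \ D G A a b).card : ℝ) * (2*B+γ) := nsmul_eq_mul _ _
    have hcompsmall : ((A \ D G A a b).card : ℝ) ≤ (k:ℝ) - 2 := by
      have h1 : (A \ D G A a b).card + 2 ≤ k := by omega
      have := (Nat.cast_le (α := ℝ)).mpr h1
      push_cast at this
      linarith
    have hcompw2 : (∑ v ∈ A \ D G A a b, ω v) ≤ ((k:ℝ) - 2) * (2*B+γ) := by
      calc (∑ v ∈ A \ D G A a b, ω v) ≤ ((A \ D G A a b).card : ℝ) * (2*B+γ) := hcompw
        _ ≤ ((k:ℝ) - 2) * (2*B+γ) := by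
            apply mul_le_mul_of_nonneg_right hcompsmall hE
    rcases le_or_gt B 0 with hB | hB
    · have hlt := hub.2 hB hcard1
      linarith
    · have hle := hub.1
      linarith
  · -- P nonempty: the minimal element works
    obtain ⟨p, hpP, hpmin⟩ := P.exists_min_image (fun p => (D G A p.1 p.2).card) hPne
    obtain ⟨a, b⟩ := p
    have hPQ : P ⊆ Q := by rw [hPdef]; exact Finset.filter_subset _ _
    have hpQ : (a,b) ∈ Q := hPQ hpP
    have hadj : (amb G A).Adj a b := ((hQmem _).mp hpQ).1
    have hWD : B ≤ ∑ v ∈ D G A a b, ω v := ((hQmem _).mp hpQ).2.2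
    have hsize : (D G A a b).card + k ≤ A.card + 1 := by
      have := (Finset.mem_filter.mp (hPdef ▸ hpP)).2
      exact this
    have hchild := hchildlt P hPQ a b hpP ?_ hpmin
    · have hbA : b ∈ A := hadj.2.2
      have hub := hub_erase hacyc hconn hadj ω B γ (hdegA b hbA) (hωE b hbA)
        (hω2 b hbA) (hω3 b hbA) hchild
      exact ⟨a, b, hadj, hWD, hub.1, hsize⟩
    · intro q hq hlt
      rw [hPdef, Finset.mem_filter]
      exact ⟨hq, by omega⟩

lemma main [Fintype V] (hacyc : G.IsAcyclic) (ω : V → ℝ) (B γ : ℝ) (hE : 0 ≤ 2*B+γ) :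
    ∀ (k : ℕ) (A : Finset V), Pre G A →
      (∀ v ∈ A, (nbrs G A v).card ≤ 3) →
      (∀ v ∈ A, ω v ≤ 2*B+γ) →
      (∀ v ∈ A, 2 ≤ (nbrs G A v).card → ω v ≤ B+γ) →
      (∀ v ∈ A, (nbrs G A v).card = 3 → ω v ≤ γ) →
      1 ≤ k → k ≤ A.card →
      ((k:ℝ)-1)*(2*B+γ) + B ≤ ∑ v ∈ A, ω v →
      ∃ F : Finset (Sym2 V), ↑F ⊆ (amb G A).edgeSet ∧ F.card = k - 1 ∧
        ∀ v ∈ A, B ≤ ∑ u ∈ A.filter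
          (fun u => ((amb G A).deleteEdges ↑F).Reachable v u), ω u := by
  intro k
  induction k with
  | zero => intro A _ _ _ _ _ h1 _ _; omega
  | succ k ih =>
    intro A hconn hdegA hωE hω2 hω3 _ hkcard hW
    rcases Nat.eq_zero_or_pos k with rfl | hk1
    · -- base case : one part, F = ∅
      refine ⟨∅, by simp, by simp, ?_⟩
      intro v hv
      have hfilt : A.filter
          (fun u => ((amb G A).deleteEdges ↑(∅ : Finset (Sym2 V))).Reachable v u) = A := by
        apply Finset.filter_true_of_mem
        intro u hu
        have : ((amb G A)).Reachable v u := hconn v hv u hu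
        simpa using this
      rw [hfilt]
      push_cast at hW
      linarith
    · -- inductive step
      have hk2 : 2 ≤ k + 1 := by omega
      have hWc : ((k:ℝ) + 1 - 1) * (2*B+γ) + B ≤ ∑ v ∈ A, ω v := by
        push_cast at hW ⊢; linarith
      obtain ⟨a, b, hadj, hSB, hSE, hsize⟩ := cut_exists hacyc ω B γ hconn hk2 hkcard
        hdegA hωE hω2 hω3 hE (by push_cast; push_cast at hWc; linarith)
      set S : Finset V := D G A a b with hSdef
      set A' : Finset V := D G A b a with hA'def
      have hcompl : A' = A \ S := D_compl hacyc hconn hadj.symm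
      have hS_A : S ⊆ A := D_subset
      have hA'_A : A' ⊆ A := D_subset
      have hbS : b ∈ S := self_mem_D hadj
      have hbA' : b ∉ A' := fun h => D_disj hacyc hadj hbS h
      have hdisjSA' : ∀ {v}, v ∈ S → v ∈ A' → False := fun h1 h2 => D_disj hacyc hadj h1 h2
      have hcards : A'.card + S.card = A.card := by
        rw [hcompl, Finset.card_sdiff_of_subset hS_A]
        have := Finset.card_le_card hS_A
        omega
      have hkA' : k ≤ A'.card := by omega
      have hsums : (∑ v ∈ A', ω v) + (∑ v ∈ S, ω v) = ∑ v ∈ A, ω v := by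
        rw [hcompl]; exact Finset.sum_sdiff hS_A
      have hW' : ((k:ℝ)-1)*(2*B+γ) + B ≤ ∑ v ∈ A', ω v := by
        push_cast at hWc; linarith
      have hconn' : Pre G A' := pre_D
      have hdegA' : ∀ v ∈ A', (nbrs G A' v).card ≤ 3 := fun v hv =>
        le_trans (Finset.card_le_card (nbrs_mono hA'_A v)) (hdegA v (hA'_A hv))
      have hωE' : ∀ v ∈ A', ω v ≤ 2*B+γ := fun v hv => hωE v (hA'_A hv)
      have hω2' : ∀ v ∈ A', 2 ≤ (nbrs G A' v).card → ω v ≤ B+γ := fun v hv h2 =>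
        hω2 v (hA'_A hv) (le_trans h2 (Finset.card_le_card (nbrs_mono hA'_A v)))
      have hω3' : ∀ v ∈ A', (nbrs G A' v).card = 3 → ω v ≤ γ := by
        intro v hv h3
        refine hω3 v (hA'_A hv) ?_
        have h1 : 3 ≤ (nbrs G A v).card := h3 ▸ Finset.card_le_card (nbrs_mono hA'_A v)
        have h2 := hdegA v (hA'_A hv)
        omega
      obtain ⟨F', hF'sub, hF'card, hF'comp⟩ := ih A' hconn' hdegA' hωE' hω2' hω3' hk1 hkA' hW'
      have heF' : s(a,b) ∉ F' := by
        intro h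
        have : (amb G A').Adj a b := (SimpleGraph.mem_edgeSet _).mp (hF'sub h)
        exact hbA' this.2.2
      refine ⟨insert s(a,b) F', ?_, ?_, ?_⟩
      · rw [Finset.coe_insert]
        intro e he
        rcases Set.mem_insert_iff.mp he with rfl | he'
        · exact (SimpleGraph.mem_edgeSet _).mpr hadj
        · exact SimpleGraph.edgeSet_mono (amb_mono G hA'_A) (hF'sub he')
      · rw [Finset.card_insert_of_notMem heF', hF'card]
        omega
      · -- the component bound
        intro v hv
        set H : SimpleGraph V := (amb G A).deleteEdges ↑(insert s(a,b) F') with hHdef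
        set H' : SimpleGraph V := (amb G A').deleteEdges ↑F' with hH'def
        have hH_le_Tab : H ≤ (amb G A).deleteEdges {s(a,b)} := by
          apply dele_anti
          rw [Finset.coe_insert]
          exact Set.singleton_subset_iff.mpr (Set.mem_insert _ _)
        have hH_le_Tba : H ≤ (amb G A).deleteEdges {s(b,a)} := by
          rw [sym2_swap]; exact hH_le_Tab
        have hSclosed : ∀ u x, u ∈ (↑S : Set V) → H.Adj u x → x ∈ (↑S : Set V) :=
          fun u x hu hux => D_closed hu (hH_le_Tab hux)
        have hA'closed : ∀ u x, u ∈ (↑A' : Set V) → H.Adj u x → x ∈ (↑A' : Set V) :=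
          fun u x hu hux => D_closed hu (hH_le_Tba hux)
        have hedgeS : ∀ u x, u ∈ (↑S : Set V) → x ∈ (↑S : Set V) →
            ((amb G A).deleteEdges {s(a,b)}).Adj u x → H.Adj u x := by
          intro u x hu hx hux
          rw [SimpleGraph.deleteEdges_adj] at hux ⊢
          refine ⟨hux.1, ?_⟩
          rw [Finset.coe_insert]
          rintro (h | h)
          · exact hux.2 h
          · have : (amb G A').Adj u x := (SimpleGraph.mem_edgeSet _).mp (hF'sub h)
            exact hdisjSA' hu this.2.1
        rcases D_union hacyc hconn hadj hv with h | h
        · have hSclosedTab : ∀ u x, u ∈ (↑S : Set V) →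
              ((amb G A).deleteEdges {s(a,b)}).Adj u x → x ∈ (↑S : Set V) :=
            fun u x hu hux => Finset.mem_coe.mpr (D_closed (Finset.mem_coe.mp hu) hux)
          have hreachS : ∀ w, w ∈ S → H.Reachable b w := by
            intro w hw
            exact reach_transfer hSclosedTab hedgeS (Finset.mem_coe.mpr hbS) ((mem_D G).mp hw).2
          have hfilt : A.filter (fun u => H.Reachable v u) = S := by
            ext u
            rw [Finset.mem_filter]
            constructor
            · rintro ⟨huA, hr⟩
              have hr2 := hr.mono hH_le_Tab
              exact (mem_D G).mpr ⟨huA, (((mem_D G).mp h).2).trans hr2⟩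
            · intro hu
              exact ⟨hS_A hu, ((hreachS v h).symm.trans (hreachS u hu))⟩
          rw [hfilt]
          exact hSB
        · have hH'_le_H : H' ≤ H := by
            intro y x hyx
            rw [SimpleGraph.deleteEdges_adj] at hyx ⊢
            refine ⟨amb_mono G hA'_A hyx.1, ?_⟩
            rw [Finset.coe_insert]
            rintro (hxy | hxy)
            · rw [Sym2.eq_iff] at hxy
              rcases hxy with ⟨rfl, rfl⟩ | ⟨rfl, rfl⟩
              · exact hbA' hyx.1.2.2
              · exact hbA' hyx.1.2.1
            · exact hyx.2 hxy
          have hedgeA' : ∀ u x, u ∈ (↑A' : Set V) → x ∈ (↑A' : Set V) →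
              H.Adj u x → H'.Adj u x := by
            intro u x hu hx hux
            rw [SimpleGraph.deleteEdges_adj] at hux ⊢
            refine ⟨⟨hux.1.1, hu, hx⟩, fun hin => hux.2 ?_⟩
            rw [Finset.coe_insert]
            exact Set.mem_insert_of_mem _ hin
          have hfilt : A.filter (fun u => H.Reachable v u)
              = A'.filter (fun u => H'.Reachable v u) := by
            ext u
            rw [Finset.mem_filter, Finset.mem_filter]
            constructor
            · rintro ⟨huA, hr⟩
              have huA' : u ∈ (↑A' : Set V) :=
                reach_closed hA'closed (Finset.mem_coe.mpr h) hr
              exact ⟨Finset.mem_coe.mp huA',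
                reach_transfer hA'closed hedgeA' (Finset.mem_coe.mpr h) hr⟩
            · rintro ⟨huA', hr⟩
              exact ⟨hA'_A huA', hr.mono hH'_le_H⟩
          rw [hfilt]
          exact hF'comp v h
lemma nbrs_univ_card [Fintype V] (v : V) [inst : Fintype (G.neighborSet v)] :
    (nbrs G Finset.univ v).card = G.degree v := by
  have h : nbrs G Finset.univ v = G.neighborFinset v := by
    ext c
    rw [mem_nbrs, SimpleGraph.mem_neighborFinset]
    simp [amb_adj]
  rw [h, SimpleGraph.card_neighborFinset_eq_degree]

end BetaK

open BetaK in
theorem beta_k_lower_bound' {V : Type*} [Fintype V] (G : SimpleGraph V)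
    (hT : G.IsTree) (hdeg : ∀ v, G.degree v ≤ 3)
    (ω : V → ℝ) (hn : 1 < Fintype.card V) (hpos : 0 < ∑ v, ω v)
    (k : ℕ) (hk : 2 ≤ k) (hkcard : k ≤ Fintype.card V - 1)
    (γ : ℝ) (hγ : ∀ v, G.degree v = 3 → ω v ≤ γ)
    (hω1 : ∀ v : V,
      (2 * (k : ℝ) - 1) / 2 * ω v - (1 / 2) * γ ≤ ∑ u, ω u)
    (hω2 : ∀ v : V, 2 ≤ G.degree v →
      (2 * (k : ℝ) - 1) * ω v - (k : ℝ) * γ ≤ ∑ u, ω u) :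
    ∃ F : Finset (Sym2 V), ↑F ⊆ G.edgeSet ∧ F.card = k - 1 ∧
      ∀ c : (G.deleteEdges ↑F).ConnectedComponent,
        ((∑ v, ω v) - ((k : ℝ) - 1) * γ) / (2 * (k : ℝ) - 1)
          ≤ ∑ v ∈ Finset.univ.filter
              (fun v => (G.deleteEdges ↑F).connectedComponentMk v = c), ω v := by
  classical
  set W : ℝ := ∑ v, ω v with hWdef
  set B : ℝ := (W - ((k : ℝ) - 1) * γ) / (2 * (k : ℝ) - 1) with hBdef
  have h2k : (0:ℝ) < 2 * (k:ℝ) - 1 := by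
    have : (2:ℝ) ≤ (k:ℝ) := by exact_mod_cast hk
    linarith
  have hEeq : 2*B+γ = (2*W+γ)/(2*(k:ℝ)-1) := by
    rw [hBdef]; field_simp; ring
  have hBγeq : B+γ = (W+(k:ℝ)*γ)/(2*(k:ℝ)-1) := by
    rw [hBdef, eq_div_iff h2k.ne', add_mul, div_mul_cancel₀ _ h2k.ne']; ring
  have hωE : ∀ v, ω v ≤ 2*B+γ := by
    intro v
    rw [hEeq, le_div_iff₀ h2k]
    have := hω1 v
    linarith
  have hE : 0 ≤ 2*B+γ := by
    by_contra hneg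
    push_neg at hneg
    have hsum : W ≤ (Fintype.card V : ℝ) * (2*B+γ) := by
      calc W ≤ (Finset.univ : Finset V).card • (2*B+γ) :=
            Finset.sum_le_card_nsmul _ _ _ (fun v _ => hωE v)
        _ = (Fintype.card V : ℝ) * (2*B+γ) := by
            rw [nsmul_eq_mul, Finset.card_univ]
    have hc0 : (0:ℝ) ≤ (Fintype.card V : ℝ) := by positivity
    nlinarith
  have hpre : Pre G Finset.univ := by
    intro u _ v _
    rw [amb_univ]
    exact hT.isConnected.preconnected u v
  have hdegA : ∀ v ∈ (Finset.univ : Finset V), (nbrs G Finset.univ v).card ≤ 3 := by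
    intro v _
    rw [nbrs_univ_card]
    exact hdeg v
  have hω2' : ∀ v ∈ (Finset.univ : Finset V),
      2 ≤ (nbrs G Finset.univ v).card → ω v ≤ B+γ := by
    intro v _ h2
    rw [nbrs_univ_card] at h2
    rw [hBγeq, le_div_iff₀ h2k]
    have := hω2 v h2
    linarith
  have hω3' : ∀ v ∈ (Finset.univ : Finset V),
      (nbrs G Finset.univ v).card = 3 → ω v ≤ γ := by
    intro v _ h3
    rw [nbrs_univ_card] at h3
    exact hγ v h3
  have hkn : k ≤ (Finset.univ : Finset V).card := by
    rw [Finset.card_univ]; omega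
  have hWeq : ((k:ℝ)-1)*(2*B+γ) + B = W := by
    rw [hEeq, hBdef, mul_div_assoc', ← add_div, div_eq_iff h2k.ne']; ring
  obtain ⟨F, hFsub, hFcard, hFcomp⟩ := main (G := G) hT.IsAcyclic ω B γ hE k Finset.univ
    hpre hdegA (fun v _ => hωE v) hω2' hω3' (by omega) hkn (le_of_eq hWeq)
  rw [amb_univ] at hFsub hFcomp
  refine ⟨F, hFsub, hFcard, ?_⟩
  intro c
  obtain ⟨v, rfl⟩ := c.exists_rep
  refine le_trans (hFcomp v (Finset.mem_univ v)) (le_of_eq (Finset.sum_congr ?_ (fun _ _ => rfl)))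
  ext u
  simp only [Finset.mem_filter, Finset.mem_univ, true_and]
  constructor
  · intro h; exact SimpleGraph.ConnectedComponent.eq.mpr h.symm
  · intro h; exact (SimpleGraph.ConnectedComponent.eq.mp h).symm


/-- **Theorem 2 (lower bound for `β_k`).** Let `T` be a quasi-binary tree (a tree all of
whose degrees are at most 3) with at least two vertices and positive total weight,
let `k ≥ 2` with `k ≤ |V(T)| - 1`, and `γ ≥ ω₃`.  If
`ω(T) ≥ max{((2k-1)/2)·ω₁ - (1/2)·γ, (2k-1)·ω₂ - k·γ}`, then
`β_k(T) ≥ (ω(T) - (k-1)γ)/(2k-1)`, i.e. there is a `k`-separator all of whose induced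
connected components have weight at least `(ω(T) - (k-1)γ)/(2k-1)`. -/
theorem beta_k_lower_bound {V : Type*} [Fintype V] (G : SimpleGraph V)
    (hT : G.IsTree) (hdeg : ∀ v, G.degree v ≤ 3)
    (ω : V → ℝ) (hn : 1 < Fintype.card V) (hpos : 0 < ∑ v, ω v)
    (k : ℕ) (hk : 2 ≤ k) (hkcard : k ≤ Fintype.card V - 1)
    (γ : ℝ) (hγ : ∀ v, G.degree v = 3 → ω v ≤ γ)
    (hω1 : ∀ v : V,
      (2 * (k : ℝ) - 1) / 2 * ω v - (1 / 2) * γ ≤ ∑ u, ω u)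
    (hω2 : ∀ v : V, 2 ≤ G.degree v →
      (2 * (k : ℝ) - 1) * ω v - (k : ℝ) * γ ≤ ∑ u, ω u) :
    ∃ F : Finset (Sym2 V), ↑F ⊆ G.edgeSet ∧ F.card = k - 1 ∧
      ∀ c : (G.deleteEdges ↑F).ConnectedComponent,
        ((∑ v, ω v) - ((k : ℝ) - 1) * γ) / (2 * (k : ℝ) - 1)
          ≤ compWeight (G.deleteEdges ↑F) ω c := by
  exact beta_k_lower_bound' G hT hdeg ω hn hpos k hk hkcard γ hγ hω1 hω2
end

section
/- Let T be a quasi-binary tree with |V(T)| > 1 and total weight ω(T) > 0, and let γ, η ∈ ℝ be such that γ ≥ ω₃ and max{ (ω₁ − γ)/2 , ω₂ − γ } ≤ η ≤ ω(T)/2. Then there exists an edge e ∈ E(T) such that, denoting by C_e^1 and C_e^2 the two connected components of T with e deleted, one has η ≤ ω(C_e^i) ≤ 2η + γ for some i ∈ {1, 2}. -/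
open scoped Classical

namespace TreeAux

open SimpleGraph Finset

variable {V : Type*} [Fintype V] {G : SimpleGraph V}

/-- Vertex set of the connected component of `v` after deleting edge `e`. -/
noncomputable def Sset (G : SimpleGraph V) (e : Sym2 V) (v : V) : Finset V :=
  Finset.univ.filter (fun x => (G.deleteEdges {e}).Reachable x v)

/-- Weight of the connected component of `v` after deleting edge `e`. -/
noncomputable def FW (G : SimpleGraph V) (ω : V → ℝ) (e : Sym2 V) (v : V) : ℝ :=
  ∑ x ∈ Sset G e v, ω x

lemma mem_Sset {e : Sym2 V} {v x : V} :
    x ∈ Sset G e v ↔ (G.deleteEdges {e}).Reachable x v := by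
  simp [Sset]

lemma compWeight_eq (ω : V → ℝ) (e : Sym2 V) (v : V) :
    compWeight (G.deleteEdges {e}) ω ((G.deleteEdges {e}).connectedComponentMk v)
      = FW G ω e v := by
  unfold compWeight FW Sset
  refine Finset.sum_congr ?_ (fun _ _ => rfl)
  ext x
  simp [SimpleGraph.ConnectedComponent.eq]

lemma not_reachable_delete (hT : G.IsTree) {u v : V} (h : G.Adj u v) :
    ¬ (G.deleteEdges {s(u, v)}).Reachable u v := by
  have hb := (SimpleGraph.isAcyclic_iff_forall_adj_isBridge.mp hT.IsAcyclic) h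
  rw [SimpleGraph.isBridge_iff] at hb
  exact hb

lemma reach_or_aux (u v : V) {x y : V} (p : G.Walk x y) :
    (G.deleteEdges {s(u, v)}).Reachable x u ∨ (G.deleteEdges {s(u, v)}).Reachable x v ∨
      (G.deleteEdges {s(u, v)}).Reachable x y := by
  induction p with
  | nil => exact Or.inr (Or.inr (SimpleGraph.Reachable.refl _))
  | @cons a b c ha q ih =>
    by_cases he : s(a, b) = s(u, v)
    · rw [Sym2.eq_iff] at he
      rcases he with ⟨h1, -⟩ | ⟨h1, -⟩
      · exact Or.inl (h1 ▸ SimpleGraph.Reachable.refl a)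
      · exact Or.inr (Or.inl (h1 ▸ SimpleGraph.Reachable.refl a))
    · have hadj : (G.deleteEdges {s(u, v)}).Adj a b := by
        rw [SimpleGraph.deleteEdges_adj]
        exact ⟨ha, by simpa using he⟩
      rcases ih with h1 | h1 | h1
      · exact Or.inl (hadj.reachable.trans h1)
      · exact Or.inr (Or.inl (hadj.reachable.trans h1))
      · exact Or.inr (Or.inr (hadj.reachable.trans h1))

lemma FW_add (hT : G.IsTree) {u v : V} (h : G.Adj u v) (ω : V → ℝ) :
    FW G ω s(u, v) u + FW G ω s(u, v) v = ∑ x, ω x := by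
  have key : ∀ x : V, (G.deleteEdges {s(u, v)}).Reachable x u ↔
      ¬ (G.deleteEdges {s(u, v)}).Reachable x v := by
    intro x
    constructor
    · intro h1 h2
      exact not_reachable_delete hT h (h1.symm.trans h2)
    · intro h2
      obtain ⟨p⟩ := hT.isConnected.preconnected x v
      rcases reach_or_aux u v p with h1 | h1 | h1
      · exact h1
      · exact absurd h1 h2
      · exact absurd h1 h2
  have hset : Finset.univ.filter (fun x => (G.deleteEdges {s(u, v)}).Reachable x u)
      = Finset.univ.filter (fun x => ¬ (G.deleteEdges {s(u, v)}).Reachable x v) := by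
    ext x
    simpa using key x
  unfold FW Sset
  rw [hset, add_comm]
  exact Finset.sum_filter_add_sum_filter_not _ _ _

lemma Sset_subset (hT : G.IsTree) {u v w : V} (h : G.Adj u v) (hw : G.Adj v w)
    (hwu : w ≠ u) :
    Sset G s(v, w) w ⊆ (Sset G s(u, v) v).erase v := by
  intro x hx
  rw [mem_Sset] at hx
  obtain ⟨p0⟩ := hx
  have hp : p0.bypass.IsPath := p0.bypass_isPath
  set p := p0.bypass with hpdef
  have hvp : v ∉ p.support := by
    intro hv
    exact not_reachable_delete hT hw ⟨p.dropUntil v hv⟩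
  have he : ∀ e ∈ p.edges, e ∈ (G.deleteEdges {s(u, v)}).edgeSet := by
    intro e hep
    have h1 : e ∈ (G.deleteEdges {s(v, w)}).edgeSet := p.edges_subset_edgeSet hep
    rw [SimpleGraph.edgeSet_deleteEdges] at h1 ⊢
    refine ⟨h1.1, ?_⟩
    intro hmem
    rw [Set.mem_singleton_iff] at hmem
    subst hmem
    exact hvp (p.snd_mem_support_of_mem_edges hep)
  have hadj : (G.deleteEdges {s(u, v)}).Adj w v := by
    rw [SimpleGraph.deleteEdges_adj]
    refine ⟨hw.symm, ?_⟩
    rw [Set.mem_singleton_iff, Sym2.eq_iff]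
    rintro (⟨h1, -⟩ | ⟨h1, -⟩)
    · exact hwu h1
    · exact hw.ne h1.symm
  have hreach : (G.deleteEdges {s(u, v)}).Reachable x v :=
    ⟨(p.transfer _ he).append hadj.toWalk⟩
  rw [Finset.mem_erase, mem_Sset]
  refine ⟨?_, hreach⟩
  rintro rfl
  exact not_reachable_delete hT hw ⟨p0⟩

lemma v_not_mem_Sset (hT : G.IsTree) {v w : V} (hw : G.Adj v w) :
    v ∉ Sset G s(v, w) w := by
  rw [mem_Sset]
  exact not_reachable_delete hT hw

lemma Sset_eq (hT : G.IsTree) {u v : V} (h : G.Adj u v) :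
    Sset G s(u, v) v
      = insert v (((G.neighborFinset v).erase u).biUnion (fun w => Sset G s(v, w) w)) := by
  apply Finset.Subset.antisymm
  · intro x hx
    rw [mem_Sset] at hx
    by_cases hxv : x = v
    · subst hxv
      exact Finset.mem_insert_self _ _
    · obtain ⟨p0⟩ := hx.symm
      have hpath : ∃ p : (G.deleteEdges {s(u, v)}).Walk v x, p.IsPath :=
        ⟨p0.bypass, p0.bypass_isPath⟩
      obtain ⟨p, hp⟩ := hpath
      cases p with
      | nil => exact absurd rfl (Ne.symm hxv)
      | @cons _ w' _ ha q =>
        rw [SimpleGraph.Walk.cons_isPath_iff] at hp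
        have hadj : G.Adj v w' := (SimpleGraph.deleteEdges_adj.mp ha).1
        have hne : s(v, w') ≠ s(u, v) := by
          have := (SimpleGraph.deleteEdges_adj.mp ha).2
          simpa using this
        have hw'u : w' ≠ u := by
          rintro rfl
          exact hne (Sym2.eq_swap)
        have hq : ∀ e ∈ q.edges, e ∈ (G.deleteEdges {s(v, w')}).edgeSet := by
          intro e hep
          have h1 : e ∈ (G.deleteEdges {s(u, v)}).edgeSet := q.edges_subset_edgeSet hep
          rw [SimpleGraph.edgeSet_deleteEdges] at h1 ⊢
          refine ⟨h1.1, ?_⟩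
          intro hmem
          rw [Set.mem_singleton_iff] at hmem
          subst hmem
          exact hp.2 (q.fst_mem_support_of_mem_edges hep)
        have hreach : (G.deleteEdges {s(v, w')}).Reachable x w' :=
          ⟨(q.transfer _ hq).reverse⟩
        refine Finset.mem_insert_of_mem (Finset.mem_biUnion.mpr ⟨w', ?_, mem_Sset.mpr hreach⟩)
        rw [Finset.mem_erase]
        exact ⟨hw'u, (SimpleGraph.mem_neighborFinset _ _ _).mpr hadj⟩
  · intro x hx
    rcases Finset.mem_insert.mp hx with rfl | hx
    · exact mem_Sset.mpr (SimpleGraph.Reachable.refl _)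
    · obtain ⟨w, hwm, hxw⟩ := Finset.mem_biUnion.mp hx
      rw [Finset.mem_erase, SimpleGraph.mem_neighborFinset] at hwm
      exact Finset.erase_subset _ _ (Sset_subset hT h hwm.2 hwm.1 hxw)

lemma Sset_disj (hT : G.IsTree) {v w₁ w₂ : V} (h1 : G.Adj v w₁) (h2 : G.Adj v w₂)
    (hne : w₁ ≠ w₂) :
    Disjoint (Sset G s(v, w₁) w₁) (Sset G s(v, w₂) w₂) := by
  rw [Finset.disjoint_left]
  intro x hx1 hx2
  have hsub := Sset_subset hT h1.symm h2 hne.symm hx2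
  rw [Finset.mem_erase, mem_Sset] at hsub
  have hx1' := mem_Sset.mp hx1
  have hxv : (G.deleteEdges {s(v, w₁)}).Reachable x v := by
    have := hsub.2
    rwa [show s(w₁, v) = s(v, w₁) from Sym2.eq_swap] at this
  exact not_reachable_delete hT h1 (hxv.symm.trans hx1')

lemma FW_eq (hT : G.IsTree) (ω : V → ℝ) {u v : V} (h : G.Adj u v) :
    FW G ω s(u, v) v = ω v + ∑ w ∈ (G.neighborFinset v).erase u, FW G ω s(v, w) w := by
  unfold FW
  rw [Sset_eq hT h, Finset.sum_insert, Finset.sum_biUnion]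
  · intro w₁ hw₁ w₂ hw₂ hne
    simp only [Finset.coe_erase, Set.mem_diff, Finset.mem_coe,
      SimpleGraph.mem_neighborFinset] at hw₁ hw₂
    exact Sset_disj hT hw₁.1 hw₂.1 hne
  · rw [Finset.mem_biUnion]
    rintro ⟨w, hwm, hvm⟩
    rw [Finset.mem_erase, SimpleGraph.mem_neighborFinset] at hwm
    exact v_not_mem_Sset hT hwm.2 hvm

lemma card_lt (hT : G.IsTree) {u v w : V} (h : G.Adj u v) (hw : G.Adj v w)
    (hwu : w ≠ u) :
    (Sset G s(v, w) w).card < (Sset G s(u, v) v).card := by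
  have hvmem : v ∈ Sset G s(u, v) v := mem_Sset.mpr (SimpleGraph.Reachable.refl _)
  calc (Sset G s(v, w) w).card ≤ ((Sset G s(u, v) v).erase v).card :=
        Finset.card_le_card (Sset_subset hT h hw hwu)
    _ < (Sset G s(u, v) v).card := Finset.card_erase_lt_of_mem hvmem

end TreeAux

open TreeAux SimpleGraph in
/-- **Lemma 1.** Let `T` be a quasi-binary tree (a tree all of whose degrees are
at most 3) with more than one vertex and positive total weight, and let `γ, η ∈ ℝ`
with `γ ≥ ω₃` and `max{(ω₁ - γ)/2, ω₂ - γ} ≤ η ≤ ω(T)/2`.  Then there is an edge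
`e` of `T` such that one of the two connected components of `T \ {e}` has weight
between `η` and `2η + γ`. -/
theorem exists_edge_component_weight_between {V : Type*} [Fintype V]
    (G : SimpleGraph V) (hT : G.IsTree) (hdeg : ∀ v, G.degree v ≤ 3)
    (ω : V → ℝ) (hn : 1 < Fintype.card V) (hpos : 0 < ∑ v, ω v)
    (γ η : ℝ) (hγ : ∀ v, G.degree v = 3 → ω v ≤ γ)
    (hη1 : ∀ v : V, (ω v - γ) / 2 ≤ η)
    (hη2 : ∀ v : V, 2 ≤ G.degree v → ω v - γ ≤ η)
    (hηup : η ≤ (∑ v, ω v) / 2) :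
    ∃ e ∈ G.edgeSet, ∃ c : (G.deleteEdges {e}).ConnectedComponent,
      η ≤ compWeight (G.deleteEdges {e}) ω c ∧
      compWeight (G.deleteEdges {e}) ω c ≤ 2 * η + γ := by
  classical
  -- there is an edge
  obtain ⟨a, b, hab⟩ : ∃ a b, G.Adj a b := by
    obtain ⟨a, b, hne⟩ := Fintype.exists_pair_of_one_lt_card hn
    obtain ⟨p⟩ := hT.isConnected.preconnected a b
    cases p with
    | nil => exact absurd rfl hne
    | cons ha q => exact ⟨_, _, ha⟩
  set P : Finset (V × V) :=
    Finset.univ.filter (fun p => G.Adj p.1 p.2 ∧ η ≤ FW G ω s(p.1, p.2) p.2) with hP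
  have hPne : P.Nonempty := by
    have hsum := FW_add hT hab ω
    by_cases hb : η ≤ FW G ω s(a, b) b
    · refine ⟨(a, b), ?_⟩
      simp only [hP, Finset.mem_filter, Finset.mem_univ, true_and]
      exact ⟨hab, hb⟩
    · refine ⟨(b, a), ?_⟩
      simp only [hP, Finset.mem_filter, Finset.mem_univ, true_and]
      refine ⟨hab.symm, ?_⟩
      rw [show s(b, a) = s(a, b) from Sym2.eq_swap]
      push_neg at hb
      linarith
  obtain ⟨⟨u, v⟩, hmem, hmin⟩ :=
    P.exists_min_image (fun p => (Sset G s(p.1, p.2) p.2).card) hPne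
  simp only [hP, Finset.mem_filter, Finset.mem_univ, true_and] at hmem
  obtain ⟨huv, hηF⟩ := hmem
  -- all deeper subcomponents have weight < η
  have hkey : ∀ w ∈ (G.neighborFinset v).erase u, FW G ω s(v, w) w ≤ η := by
    intro w hwm
    rw [Finset.mem_erase, SimpleGraph.mem_neighborFinset] at hwm
    obtain ⟨hwu, hadj⟩ := hwm
    by_contra hlt
    push_neg at hlt
    have hPm : (v, w) ∈ P := by
      simp only [hP, Finset.mem_filter, Finset.mem_univ, true_and]
      exact ⟨hadj, le_of_lt hlt⟩
    have hle := hmin (v, w) hPm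
    exact absurd (card_lt hT huv hadj hwu) (not_lt.mpr hle)
  have hFeq := FW_eq hT ω huv
  set M := (G.neighborFinset v).erase u with hM
  have hu' : u ∈ G.neighborFinset v := (SimpleGraph.mem_neighborFinset _ _ _).mpr huv.symm
  have hMcard : M.card = G.degree v - 1 := by
    rw [hM, Finset.card_erase_of_mem hu']
    rfl
  have hd1 : 1 ≤ G.degree v := Finset.card_pos.mpr ⟨u, hu'⟩
  have hd3 : G.degree v ≤ 3 := hdeg v
  have hsumM : ∑ w ∈ M, FW G ω s(v, w) w ≤ (M.card : ℝ) * η := by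
    have := Finset.sum_le_card_nsmul M (fun w => FW G ω s(v, w) w) η hkey
    simpa [nsmul_eq_mul] using this
  have hub : FW G ω s(u, v) v ≤ 2 * η + γ := by
    rw [hFeq]
    have hcases : G.degree v = 1 ∨ G.degree v = 2 ∨ G.degree v = 3 := by omega
    rcases hcases with hdv | hdv | hdv
    · have h0 : M.card = 0 := by omega
      rw [h0] at hsumM
      have := hη1 v
      push_cast at hsumM
      linarith
    · have h0 : M.card = 1 := by omega
      rw [h0] at hsumM
      have := hη2 v (by omega)
      push_cast at hsumM
      linarith
    · have h0 : M.card = 2 := by omega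
      rw [h0] at hsumM
      have := hγ v hdv
      push_cast at hsumM
      linarith
  refine ⟨s(u, v), huv, (G.deleteEdges {s(u, v)}).connectedComponentMk v, ?_, ?_⟩
  · rw [compWeight_eq]
    exact hηF
  · rw [compWeight_eq]
    exact hub
end

section
/- Let T be a quasi-binary tree with |V(T)| > 1 and total weight ω(T) > 0, and let γ ∈ ℝ with γ ≥ ω₃. If ω(T) ≥ max{ (3ω₁ − γ)/2 , 3ω₂ − 2γ }, then β₂(T) ≥ (ω(T) − γ)/3; that is, there exists an edge e ∈ E(T) such that both connected components of T with e deleted have weight at least (ω(T) − γ)/3. -/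
open scoped Classical

set_option linter.unusedSectionVars false
set_option linter.unusedVariables false

namespace BetaAux

open SimpleGraph Finset

variable {V : Type*} [Fintype V]

/-- The side of the edge `s(x,y)` containing `y`, as a finset. -/
noncomputable def sideF (G : SimpleGraph V) (x y : V) : Finset V :=
  Finset.univ.filter (fun w => (G.deleteEdges {s(x,y)}).Reachable w y)

variable {G : SimpleGraph V}

lemma mem_sideF {x y w : V} :
    w ∈ sideF G x y ↔ (G.deleteEdges {s(x,y)}).Reachable w y := by
  simp [sideF]

lemma bridge (hT : G.IsAcyclic) {x y : V} (h : G.Adj x y) :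
    ¬ (G.deleteEdges {s(x,y)}).Reachable x y :=
  ((isBridge_iff).mp ((isAcyclic_iff_forall_adj_isBridge.mp hT) h))

lemma dich_aux {x y a z : V} (p : G.Walk a z)
    (hz : (G.deleteEdges {s(x,y)}).Reachable z x ∨ (G.deleteEdges {s(x,y)}).Reachable z y) :
    (G.deleteEdges {s(x,y)}).Reachable a x ∨ (G.deleteEdges {s(x,y)}).Reachable a y := by
  induction p with
  | nil => exact hz
  | @cons a b c hab q ih =>
    have ih' := ih hz
    by_cases he : s(a, b) = s(x, y)
    · rcases Sym2.eq_iff.mp he with ⟨rfl, rfl⟩ | ⟨rfl, rfl⟩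
      · exact Or.inl (Reachable.refl _)
      · exact Or.inr (Reachable.refl _)
    · have hadj : (G.deleteEdges {s(x,y)}).Adj a b := by
        rw [deleteEdges_adj]
        exact ⟨hab, by simpa using he⟩
      rcases ih' with h' | h'
      · exact Or.inl (hadj.reachable.trans h')
      · exact Or.inr (hadj.reachable.trans h')

lemma dich (hc : G.Connected) (x y w : V) :
    (G.deleteEdges {s(x,y)}).Reachable w x ∨ (G.deleteEdges {s(x,y)}).Reachable w y := by
  obtain ⟨p⟩ := hc.preconnected w y
  exact dich_aux p (Or.inr (Reachable.refl _))

lemma not_mem_support (hT : G.IsAcyclic) {x y w : V} (h : G.Adj x y)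
    (q : (G.deleteEdges {s(x,y)}).Walk w y) : x ∉ q.support :=
  fun hx => bridge hT h ⟨q.dropUntil x hx⟩

lemma mem_support_of_mem_edges {G' : SimpleGraph V} {a b x : V} {e : Sym2 V}
    (q : G'.Walk a b) (he : e ∈ q.edges) (hx : x ∈ e) : x ∈ q.support := by
  induction e using Sym2.inductionOn with
  | hf c d =>
    rcases Sym2.mem_iff.mp hx with rfl | rfl
    · exact q.fst_mem_support_of_mem_edges he
    · exact q.snd_mem_support_of_mem_edges he

/-- Transfer a walk avoiding vertex `x` to the graph with an edge at `x` deleted. -/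
noncomputable def transferWalk {f e : Sym2 V} {a b x : V}
    (q : (G.deleteEdges {f}).Walk a b) (hx : x ∉ q.support) (hxe : x ∈ e) :
    (G.deleteEdges {e}).Walk a b :=
  q.transfer _ (fun e' he' => by
    rw [edgeSet_deleteEdges]
    refine ⟨((edgeSet_deleteEdges (G := G) {f}) ▸ q.edges_subset_edgeSet he').1, ?_⟩
    intro hmem
    rw [Set.mem_singleton_iff] at hmem
    subst hmem
    exact hx (mem_support_of_mem_edges q he' hxe))

lemma v_not_mem_piece (hT : G.IsAcyclic) {v b : V} (hb : G.Adj v b) :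
    v ∉ sideF G v b := by
  rw [mem_sideF]
  exact bridge hT hb

lemma piece_subset (hT : G.IsAcyclic) {u v b : V} (hu : G.Adj u v) (hb : G.Adj v b)
    (hbu : b ≠ u) : sideF G v b ⊆ sideF G u v := by
  intro w hw
  rw [mem_sideF] at hw ⊢
  obtain ⟨q⟩ := hw
  have hv : v ∉ q.support := not_mem_support hT hb q
  have q' : (G.deleteEdges {s(u,v)}).Walk w b :=
    transferWalk q hv (by simp)
  refine q'.reachable.trans (Adj.reachable ?_)
  rw [deleteEdges_adj]
  refine ⟨hb.symm, ?_⟩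
  intro hmem
  rw [Set.mem_singleton_iff] at hmem
  rcases Sym2.eq_iff.mp hmem with ⟨h1, h2⟩ | ⟨h1, h2⟩
  · exact hbu h1
  · exact hb.ne h1.symm

lemma cover (hT : G.IsAcyclic) {u v w : V} (hu : G.Adj u v) (hw : w ∈ sideF G u v)
    (hwv : w ≠ v) : ∃ b, G.Adj v b ∧ b ≠ u ∧ w ∈ sideF G v b := by
  rw [mem_sideF] at hw
  obtain ⟨q0⟩ := hw.symm
  obtain ⟨r, hr⟩ := q0.toPath
  cases r with
  | nil => exact absurd rfl hwv.symm
  | @cons _ b _ h r' =>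
    rw [Walk.cons_isPath_iff] at hr
    have hGadj : G.Adj v b ∧ s(v, b) ∉ ({s(u,v)} : Set (Sym2 V)) := deleteEdges_adj.mp h
    have hbu : b ≠ u := by
      rintro rfl
      exact hGadj.2 (by rw [Set.mem_singleton_iff, Sym2.eq_swap])
    refine ⟨b, hGadj.1, hbu, ?_⟩
    rw [mem_sideF]
    have hv : v ∉ r'.reverse.support := by
      rw [Walk.support_reverse, List.mem_reverse]
      exact hr.2
    exact ⟨transferWalk r'.reverse hv (by simp)⟩

lemma pieces_disjoint (hT : G.IsAcyclic) {v b b' : V} (hb : G.Adj v b) (hb' : G.Adj v b')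
    (hne : b ≠ b') {w : V} (h1 : w ∈ sideF G v b) (h2 : w ∈ sideF G v b') : False := by
  rw [mem_sideF] at h1 h2
  obtain ⟨q⟩ := h1
  have hv : v ∉ q.support := not_mem_support hT hb q
  have q' : (G.deleteEdges {s(v,b')}).Walk w b := transferWalk q hv (by simp)
  have hbv : (G.deleteEdges {s(v,b')}).Adj b v := by
    rw [deleteEdges_adj]
    refine ⟨hb.symm, ?_⟩
    intro hmem
    rw [Set.mem_singleton_iff] at hmem
    rcases Sym2.eq_iff.mp hmem with ⟨h1, h2⟩ | ⟨h1, h2⟩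
    · exact hb.ne h1.symm
    · exact hne h1
  exact bridge hT hb' ((q'.reachable.trans hbv.reachable).symm.trans h2)

lemma sideF_swap {x y : V} :
    sideF G y x = Finset.univ.filter (fun w => (G.deleteEdges {s(x,y)}).Reachable w x) := by
  unfold sideF
  rw [show (s(y,x) : Sym2 V) = s(x,y) from Sym2.eq_swap]

lemma sum_sides (hT : G.IsTree) {x y : V} (hxy : G.Adj x y) (ω : V → ℝ) :
    (∑ w ∈ sideF G x y, ω w) + (∑ w ∈ sideF G y x, ω w) = ∑ v, ω v := by
  have hnot : ∀ w : V, (¬ (G.deleteEdges {s(x,y)}).Reachable w y) ↔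
      (G.deleteEdges {s(x,y)}).Reachable w x := by
    intro w
    constructor
    · intro h
      exact (dich hT.isConnected x y w).resolve_right h
    · intro h h'
      exact bridge hT.2 hxy (h.symm.trans h')
  have h1 : sideF G y x = Finset.univ.filter
      (fun w => ¬ (G.deleteEdges {s(x,y)}).Reachable w y) := by
    rw [sideF_swap]
    ext w
    simp only [Finset.mem_filter, Finset.mem_univ, true_and]
    exact (hnot w).symm
  rw [h1, sideF]
  exact Finset.sum_filter_add_sum_filter_not _ _ _

lemma comp_corr (hT : G.IsTree) {x y : V} (hxy : G.Adj x y) (ω : V → ℝ)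
    (c : (G.deleteEdges {s(x,y)}).ConnectedComponent) :
    compWeight (G.deleteEdges {s(x,y)}) ω c = ∑ w ∈ sideF G x y, ω w ∨
    compWeight (G.deleteEdges {s(x,y)}) ω c = ∑ w ∈ sideF G y x, ω w := by
  obtain ⟨w0, rfl⟩ := c.exists_rep
  rcases dich hT.isConnected x y w0 with h | h
  · right
    have hc : (G.deleteEdges {s(x,y)}).connectedComponentMk w0 =
        (G.deleteEdges {s(x,y)}).connectedComponentMk x := ConnectedComponent.sound h
    rw [show (Quot.mk (G.deleteEdges {s(x,y)}).Reachable w0) =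
      (G.deleteEdges {s(x,y)}).connectedComponentMk w0 from rfl, hc]
    unfold compWeight
    rw [sideF_swap]
    apply Finset.sum_congr _ (fun _ _ => rfl)
    ext w
    simp only [Finset.mem_filter, Finset.mem_univ, true_and]
    exact ConnectedComponent.eq
  · left
    have hc : (G.deleteEdges {s(x,y)}).connectedComponentMk w0 =
        (G.deleteEdges {s(x,y)}).connectedComponentMk y := ConnectedComponent.sound h
    rw [show (Quot.mk (G.deleteEdges {s(x,y)}).Reachable w0) =
      (G.deleteEdges {s(x,y)}).connectedComponentMk w0 from rfl, hc]
    unfold compWeight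
    unfold sideF
    apply Finset.sum_congr _ (fun _ _ => rfl)
    ext w
    simp only [Finset.mem_filter, Finset.mem_univ, true_and]
    exact ConnectedComponent.eq

end BetaAux

/-- **Lemma 2, lower bound.** Let `T` be a quasi-binary tree (a tree all of whose degrees
are at most 3) with more than one vertex and positive total weight, and let `γ ≥ ω₃`.
If `ω(T) ≥ max{(3ω₁ - γ)/2, 3ω₂ - 2γ}`, then `β₂(T) ≥ (ω(T) - γ)/3`: there is an edge
`e` such that both connected components of `T \ {e}` have weight at least `(ω(T) - γ)/3`. -/
theorem beta_two_lower_bound {V : Type*} [Fintype V]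
    (G : SimpleGraph V) (hT : G.IsTree) (hdeg : ∀ v, G.degree v ≤ 3)
    (ω : V → ℝ) (hn : 1 < Fintype.card V) (hpos : 0 < ∑ v, ω v)
    (γ : ℝ) (hγ : ∀ v, G.degree v = 3 → ω v ≤ γ)
    (hω1 : ∀ v : V, (3 * ω v - γ) / 2 ≤ ∑ u, ω u)
    (hω2 : ∀ v : V, 2 ≤ G.degree v → 3 * ω v - 2 * γ ≤ ∑ u, ω u) :
    ∃ e ∈ G.edgeSet, ∀ c : (G.deleteEdges {e}).ConnectedComponent,
      ((∑ v, ω v) - γ) / 3 ≤ compWeight (G.deleteEdges {e}) ω c := by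
  by_contra hcon
  push_neg at hcon
  have key : ∀ x y, G.Adj x y →
      (∑ w ∈ BetaAux.sideF G x y, ω w) < ((∑ v, ω v) - γ) / 3 ∨
      (∑ w ∈ BetaAux.sideF G y x, ω w) < ((∑ v, ω v) - γ) / 3 := by
    intro x y hxy
    obtain ⟨c, hc⟩ := hcon s(x,y) ((SimpleGraph.mem_edgeSet G).mpr hxy)
    rcases BetaAux.comp_corr hT hxy ω c with h | h
    · exact Or.inl (h ▸ hc)
    · exact Or.inr (h ▸ hc)
  have hsum : ∀ x y, G.Adj x y →
      (∑ w ∈ BetaAux.sideF G x y, ω w) + (∑ w ∈ BetaAux.sideF G y x, ω w) = ∑ v, ω v :=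
    fun x y hxy => BetaAux.sum_sides hT hxy ω
  set P : V × V → Prop := fun p => G.Adj p.1 p.2 ∧
      ((∑ v, ω v) - ((∑ v, ω v) - γ) / 3) < ∑ w ∈ BetaAux.sideF G p.1 p.2, ω w with hP
  have hPne : (Finset.univ.filter P).Nonempty := by
    obtain ⟨a, b, hab⟩ := Fintype.exists_pair_of_one_lt_card hn
    obtain ⟨p⟩ := hT.isConnected.preconnected a b
    have hedge : ∃ u v, G.Adj u v := by
      cases p with
      | nil => exact absurd rfl hab
      | cons h _ => exact ⟨_, _, h⟩
    obtain ⟨u0, v0, h0⟩ := hedge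
    have hs0 := hsum u0 v0 h0
    rcases key u0 v0 h0 with h | h
    · exact ⟨(v0, u0), Finset.mem_filter.mpr ⟨Finset.mem_univ _, h0.symm, by
        simp only; linarith⟩⟩
    · exact ⟨(u0, v0), Finset.mem_filter.mpr ⟨Finset.mem_univ _, h0, by
        simp only; linarith⟩⟩
  obtain ⟨⟨u, v⟩, hmem, hmin⟩ := Finset.exists_min_image (Finset.univ.filter P)
    (fun p => (BetaAux.sideF G p.1 p.2).card) hPne
  rw [Finset.mem_filter] at hmem
  obtain ⟨huv, hWuv⟩ := hmem.2
  set s : Finset V := (G.neighborFinset v).erase u with hs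
  have hvin : v ∈ BetaAux.sideF G u v := BetaAux.mem_sideF.mpr (SimpleGraph.Reachable.refl _)
  have hpiece : ∀ b ∈ s, G.Adj v b ∧ b ≠ u := by
    intro b hb
    rw [hs, Finset.mem_erase, SimpleGraph.mem_neighborFinset] at hb
    exact ⟨hb.2, hb.1⟩
  have hcard : ∀ b ∈ s, (BetaAux.sideF G v b).card < (BetaAux.sideF G u v).card := by
    intro b hb
    obtain ⟨hadj, hbu⟩ := hpiece b hb
    have hsub := BetaAux.piece_subset hT.2 huv hadj hbu
    have hvn := BetaAux.v_not_mem_piece hT.2 hadj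
    exact Finset.card_lt_card ((Finset.ssubset_iff_of_subset hsub).mpr ⟨v, hvin, hvn⟩)
  have hlt : ∀ b ∈ s, (∑ w ∈ BetaAux.sideF G v b, ω w) < ((∑ v, ω v) - γ) / 3 := by
    intro b hb
    obtain ⟨hadj, hbu⟩ := hpiece b hb
    rcases key v b hadj with h | h
    · exact h
    · exfalso
      have hs1 := hsum v b hadj
      have h2 : P (v, b) := ⟨hadj, by simp only; linarith⟩
      have h3 : (BetaAux.sideF G u v).card ≤ (BetaAux.sideF G v b).card :=
        hmin (v, b) (Finset.mem_filter.mpr ⟨Finset.mem_univ _, h2⟩)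
      exact absurd (hcard b hb) (not_lt.mpr h3)
  have hdecomp : BetaAux.sideF G u v
      = insert v (s.biUnion (fun b => BetaAux.sideF G v b)) := by
    ext w
    simp only [Finset.mem_insert, Finset.mem_biUnion]
    constructor
    · intro hw
      by_cases hwv : w = v
      · exact Or.inl hwv
      · obtain ⟨b, hadj, hbu, hwb⟩ := BetaAux.cover hT.2 huv hw hwv
        refine Or.inr ⟨b, ?_, hwb⟩
        rw [hs, Finset.mem_erase, SimpleGraph.mem_neighborFinset]
        exact ⟨hbu, hadj⟩
    · rintro (rfl | hex)
      · exact hvin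
      · obtain ⟨b, hb, hwb⟩ := hex
        exact BetaAux.piece_subset hT.2 huv (hpiece b hb).1 (hpiece b hb).2 hwb
  have hvnot : v ∉ s.biUnion (fun b => BetaAux.sideF G v b) := by
    simp only [Finset.mem_biUnion, not_exists]
    exact fun b hb => BetaAux.v_not_mem_piece hT.2 (hpiece b hb.1).1 hb.2
  have hdisj : (↑s : Set V).PairwiseDisjoint (fun b => BetaAux.sideF G v b) := by
    intro b hb b' hb' hne
    refine Finset.disjoint_left.mpr (fun {w} hw hw' => ?_)
    exact BetaAux.pieces_disjoint hT.2 (hpiece b (Finset.mem_coe.mp hb)).1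
      (hpiece b' (Finset.mem_coe.mp hb')).1 hne hw hw'
  have hsplit : (∑ w ∈ BetaAux.sideF G u v, ω w)
      = ω v + ∑ b ∈ s, ∑ w ∈ BetaAux.sideF G v b, ω w := by
    rw [hdecomp, Finset.sum_insert hvnot, Finset.sum_biUnion hdisj]
  have hsb : (∑ b ∈ s, ∑ w ∈ BetaAux.sideF G v b, ω w)
      ≤ (s.card : ℝ) * (((∑ v, ω v) - γ) / 3) := by
    calc (∑ b ∈ s, ∑ w ∈ BetaAux.sideF G v b, ω w)
        ≤ ∑ _b ∈ s, ((∑ v, ω v) - γ) / 3 := Finset.sum_le_sum (fun b hb => (hlt b hb).le)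
      _ = (s.card : ℝ) * (((∑ v, ω v) - γ) / 3) := by rw [Finset.sum_const, nsmul_eq_mul]
  have hscard : s.card = G.degree v - 1 := by
    have hu : u ∈ G.neighborFinset v := by
      rw [SimpleGraph.mem_neighborFinset]; exact huv.symm
    rw [hs, Finset.card_erase_of_mem hu]
    rfl
  have hdpos : 1 ≤ G.degree v :=
    (G.degree_pos_iff_exists_adj v).mpr ⟨u, huv.symm⟩
  have hd3 := hdeg v
  have hdcases : G.degree v = 1 ∨ G.degree v = 2 ∨ G.degree v = 3 := by omega
  rcases hdcases with hd | hd | hd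
  · have hc0 : s.card = 0 := by omega
    rw [hc0] at hsb
    have h1 := hω1 v
    push_cast at hsb
    linarith
  · have hc1 : s.card = 1 := by omega
    rw [hc1] at hsb
    have h2 := hω2 v (by omega)
    push_cast at hsb
    linarith
  · have hc2 : s.card = 2 := by omega
    rw [hc2] at hsb
    have h3 := hγ v hd
    push_cast at hsb
    linarith
end

section
/- Let T be a quasi-binary tree with |V(T)| > 1 and total weight ω(T) > 0, and let γ ∈ ℝ with γ ≥ ω₃. If ω(T) ≥ max{ (3ω₁ − γ)/2 , 3ω₂ − 2γ }, then α₂(T) ≤ (2ω(T) + γ)/3; that is, there exists an edge e ∈ E(T) such that both connected components of T with e deleted have weight at most (2ω(T) + γ)/3. -/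
open scoped Classical

namespace AlphaTwoAux

open SimpleGraph Finset

variable {V : Type*} [Fintype V] {G : SimpleGraph V}

/-- The set of vertices reachable from `x` after deleting edge `e`. -/
noncomputable def side (G : SimpleGraph V) (e : Sym2 V) (x : V) : Finset V :=
  Finset.univ.filter (fun u => (G.deleteEdges {e}).Reachable x u)

lemma mem_side {e : Sym2 V} {x u : V} :
    u ∈ side G e x ↔ (G.deleteEdges {e}).Reachable x u := by
  simp [side]

lemma self_mem_side (e : Sym2 V) (x : V) : x ∈ side G e x :=
  mem_side.mpr (Reachable.refl x)

lemma compWeight_eq_side (ω : V → ℝ) (e : Sym2 V) (x : V) :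
    compWeight (G.deleteEdges {e}) ω ((G.deleteEdges {e}).connectedComponentMk x)
      = ∑ v ∈ side G e x, ω v := by
  unfold compWeight
  apply Finset.sum_congr _ (fun _ _ => rfl)
  ext v
  simp only [Finset.mem_filter, Finset.mem_univ, true_and, mem_side,
    SimpleGraph.ConnectedComponent.eq]
  exact ⟨fun h => h.symm, fun h => h.symm⟩

lemma side_congr {e : Sym2 V} {x w : V}
    (h : (G.deleteEdges {e}).Reachable x w) : side G e w = side G e x := by
  ext u
  simp only [mem_side]
  exact ⟨fun hu => h.trans hu, fun hu => h.symm.trans hu⟩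

/-- Bridge fact: in an acyclic graph, deleting an edge disconnects its endpoints. -/
lemma not_reach_of_adj (hac : G.IsAcyclic) {x y : V} (hxy : G.Adj x y) :
    ¬ (G.deleteEdges {s(x, y)}).Reachable x y := by
  have hb := (SimpleGraph.isAcyclic_iff_forall_adj_isBridge.mp hac) hxy
  exact SimpleGraph.isBridge_iff.mp hb

lemma reach_step {x y a b : V} (hab : G.Adj a b)
    (h : (G.deleteEdges {s(x, y)}).Reachable x a ∨ (G.deleteEdges {s(x, y)}).Reachable y a) :
    (G.deleteEdges {s(x, y)}).Reachable x b ∨ (G.deleteEdges {s(x, y)}).Reachable y b := by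
  by_cases he : s(a, b) = s(x, y)
  · rw [Sym2.eq_iff] at he
    rcases he with ⟨rfl, rfl⟩ | ⟨rfl, rfl⟩
    · exact Or.inr (Reachable.refl _)
    · exact Or.inl (Reachable.refl _)
  · have hadj : (G.deleteEdges {s(x, y)}).Adj a b := by
      rw [SimpleGraph.deleteEdges_adj]
      exact ⟨hab, by simpa using he⟩
    rcases h with h | h
    · exact Or.inl (h.trans hadj.reachable)
    · exact Or.inr (h.trans hadj.reachable)

lemma reach_cover_aux {x y a u : V} (w : G.Walk a u)
    (h : (G.deleteEdges {s(x, y)}).Reachable x a ∨ (G.deleteEdges {s(x, y)}).Reachable y a) :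
    (G.deleteEdges {s(x, y)}).Reachable x u ∨ (G.deleteEdges {s(x, y)}).Reachable y u := by
  induction w with
  | nil => exact h
  | cons hadj p ih => exact ih (reach_step hadj h)

lemma reach_cover (hc : G.Connected) (x y u : V) :
    (G.deleteEdges {s(x, y)}).Reachable x u ∨ (G.deleteEdges {s(x, y)}).Reachable y u := by
  obtain ⟨w⟩ := hc.preconnected x u
  exact reach_cover_aux w (Or.inl (Reachable.refl _))

lemma not_reach_side {e : Sym2 V} {z x u : V}
    (hzx : ¬ (G.deleteEdges {e}).Reachable z x)
    (w : (G.deleteEdges {e}).Walk z u) : x ∉ w.support := by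
  intro hx
  exact hzx ⟨w.takeUntil x hx⟩

/-- A walk avoiding a vertex `x` can be transferred to the graph with any edge at `x`
deleted instead. -/
lemma walk_transfer_away {e : Sym2 V} {z u x c : V}
    (w : (G.deleteEdges {e}).Walk z u) (hx : x ∉ w.support) :
    (G.deleteEdges {s(x, c)}).Reachable z u := by
  refine ⟨w.transfer _ fun g hg => ?_⟩
  have hgG := w.edges_subset_edgeSet hg
  rw [SimpleGraph.edgeSet_deleteEdges] at hgG
  rw [SimpleGraph.edgeSet_deleteEdges]
  refine ⟨hgG.1, fun hgf => ?_⟩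
  rw [Set.mem_singleton_iff] at hgf
  rw [hgf] at hg
  exact hx (w.fst_mem_support_of_mem_edges hg)

lemma sxz_ne_sxy {x y z : V} (hxy : G.Adj x y) (hxz : G.Adj x z) (hzy : z ≠ y) :
    s(x, z) ≠ s(x, y) := by
  intro h
  rcases Sym2.eq_iff.mp h with ⟨-, rfl⟩ | ⟨rfl, -⟩
  · exact hzy rfl
  · exact hxy.ne rfl

/-- Claim A: the subtree hanging from `z` across edge `s(x,z)` is contained in the
`x`-side of any other edge `s(x,y)` at `x`, and avoids `x`. -/
lemma subtree_subset (hac : G.IsAcyclic) {x y z u : V} (hxy : G.Adj x y) (hxz : G.Adj x z)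
    (hzy : z ≠ y) (hr : (G.deleteEdges {s(x, z)}).Reachable z u) :
    (G.deleteEdges {s(x, y)}).Reachable x u ∧ u ≠ x := by
  obtain ⟨w⟩ := hr
  have hzx : ¬ (G.deleteEdges {s(x, z)}).Reachable z x :=
    fun h => not_reach_of_adj hac hxz h.symm
  have hx : x ∉ w.support := not_reach_side hzx w
  have hadj : (G.deleteEdges {s(x, y)}).Adj x z := by
    rw [SimpleGraph.deleteEdges_adj]
    exact ⟨hxz, by simpa using sxz_ne_sxy hxy hxz hzy⟩
  have hzu : (G.deleteEdges {s(x, y)}).Reachable z u := walk_transfer_away w hx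
  refine ⟨hadj.reachable.trans hzu, ?_⟩
  rintro rfl
  exact hx w.end_mem_support

/-- Claim C: subtrees hanging from distinct neighbors `z₁ ≠ z₂` of `x` are disjoint. -/
lemma subtree_disjoint (hac : G.IsAcyclic) {x z₁ z₂ u : V}
    (h1 : G.Adj x z₁) (h2 : G.Adj x z₂) (h12 : z₁ ≠ z₂)
    (hr1 : (G.deleteEdges {s(x, z₁)}).Reachable z₁ u)
    (hr2 : (G.deleteEdges {s(x, z₂)}).Reachable z₂ u) : False := by
  obtain ⟨w1⟩ := hr1
  have hzx : ¬ (G.deleteEdges {s(x, z₁)}).Reachable z₁ x :=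
    fun h => not_reach_of_adj hac h1 h.symm
  have hx : x ∉ w1.support := not_reach_side hzx w1
  have hz1u : (G.deleteEdges {s(x, z₂)}).Reachable z₁ u := walk_transfer_away w1 hx
  have hadj : (G.deleteEdges {s(x, z₂)}).Adj x z₁ := by
    rw [SimpleGraph.deleteEdges_adj]
    exact ⟨h1, by simpa using sxz_ne_sxy h2 h1 h12⟩
  exact not_reach_of_adj hac h2 (hadj.reachable.trans (hz1u.trans hr2.symm))

/-- Claim B: any vertex on the `x`-side of `s(x,y)`, other than `x` itself, lies in the
subtree hanging from some neighbor `z ≠ y` of `x`. -/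
lemma reach_decomp {x y u : V} (hxy : G.Adj x y)
    (hr : (G.deleteEdges {s(x, y)}).Reachable x u) (hu : u ≠ x) :
    ∃ z, G.Adj x z ∧ z ≠ y ∧ (G.deleteEdges {s(x, z)}).Reachable z u := by
  obtain ⟨w⟩ := hr
  obtain ⟨q, hq⟩ := w.toPath
  cases q with
  | nil => exact absurd rfl hu
  | @cons _ c _ hadj q' =>
    rw [SimpleGraph.Walk.cons_isPath_iff] at hq
    rw [SimpleGraph.deleteEdges_adj] at hadj
    have hcy : c ≠ y := by
      rintro rfl
      exact hadj.2 rfl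
    exact ⟨c, hadj.1, hcy, walk_transfer_away q' hq.2⟩

/-- The two sides of an edge partition the vertex set (weight version). -/
lemma side_sum_split (hac : G.IsAcyclic) (hc : G.Connected) {x y : V} (hxy : G.Adj x y)
    (ω : V → ℝ) :
    (∑ v ∈ side G s(x, y) x, ω v) + (∑ v ∈ side G s(x, y) y, ω v) = ∑ v, ω v := by
  have h := Finset.sum_filter_add_sum_filter_not Finset.univ
    (fun u => (G.deleteEdges {s(x, y)}).Reachable x u) ω
  rw [← h]
  congr 1
  apply Finset.sum_congr _ (fun _ _ => rfl)
  ext u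
  simp only [Finset.mem_filter, Finset.mem_univ, true_and, mem_side]
  constructor
  · intro hy hx
    exact not_reach_of_adj hac hxy (hx.trans hy.symm)
  · intro hnx
    rcases reach_cover hc x y u with h' | h'
    · exact absurd h' hnx
    · exact h'


end AlphaTwoAux

open AlphaTwoAux SimpleGraph Finset in
/-- **Lemma 2, upper bound.** Let `T` be a quasi-binary tree (a tree all of whose degrees
are at most 3) with more than one vertex and positive total weight, and let `γ ≥ ω₃`.
If `ω(T) ≥ max{(3ω₁ - γ)/2, 3ω₂ - 2γ}`, then `α₂(T) ≤ (2ω(T) + γ)/3`: there is an edge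
`e` such that both connected components of `T \ {e}` have weight at most `(2ω(T) + γ)/3`. -/
theorem alpha_two_upper_bound {V : Type*} [Fintype V]
    (G : SimpleGraph V) (hT : G.IsTree) (hdeg : ∀ v, G.degree v ≤ 3)
    (ω : V → ℝ) (hn : 1 < Fintype.card V) (hpos : 0 < ∑ v, ω v)
    (γ : ℝ) (hγ : ∀ v, G.degree v = 3 → ω v ≤ γ)
    (hω1 : ∀ v : V, (3 * ω v - γ) / 2 ≤ ∑ u, ω u)
    (hω2 : ∀ v : V, 2 ≤ G.degree v → 3 * ω v - 2 * γ ≤ ∑ u, ω u) :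
    ∃ e ∈ G.edgeSet, ∀ c : (G.deleteEdges {e}).ConnectedComponent,
      compWeight (G.deleteEdges {e}) ω c ≤ (2 * (∑ v, ω v) + γ) / 3 := by
  set W := ∑ v, ω v with hWdef
  set B := (2 * W + γ) / 3 with hBdef
  have hac := hT.IsAcyclic
  have hc := hT.isConnected
  by_contra hcon
  push_neg at hcon
  -- from the failure assumption, each edge has a heavy side
  have key : ∀ e ∈ G.edgeSet, ∃ w : V, B < ∑ v ∈ side G e w, ω v := by
    intro e he
    obtain ⟨c, hcw⟩ := hcon e he
    obtain ⟨w, rfl⟩ := Quot.exists_rep c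
    exact ⟨w, by rw [← compWeight_eq_side ω e w]; exact hcw⟩
  -- there is at least one edge
  have hE : ∃ e, e ∈ G.edgeSet := by
    obtain ⟨v₀, w₀, hvw⟩ := Fintype.exists_pair_of_one_lt_card hn
    obtain ⟨p⟩ := hc.preconnected v₀ w₀
    cases p with
    | nil => exact absurd rfl hvw
    | cons hadj _ => exact ⟨_, (SimpleGraph.mem_edgeSet _).mpr hadj⟩
  -- minimize the cardinality of a heavy side
  have hP : ∃ n : ℕ, ∃ e ∈ G.edgeSet, ∃ w : V,
      (B < ∑ v ∈ side G e w, ω v) ∧ (side G e w).card = n := by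
    obtain ⟨e, he⟩ := hE
    obtain ⟨w, hw⟩ := key e he
    exact ⟨(side G e w).card, e, he, w, hw, rfl⟩
  set n₀ := Nat.find hP with hn₀
  obtain ⟨e, he, w, hwB, hwcard⟩ := Nat.find_spec hP
  have hmin : ∀ m, m < n₀ → ¬ ∃ e ∈ G.edgeSet, ∃ w : V,
      (B < ∑ v ∈ side G e w, ω v) ∧ (side G e w).card = m := fun m hm => Nat.find_min hP hm
  -- the main step: a minimal heavy side rooted at an endpoint gives a contradiction
  have main : ∀ x y : V, G.Adj x y → (B < ∑ v ∈ side G s(x, y) x, ω v) →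
      (side G s(x, y) x).card = n₀ → False := by
    intro x y hxy hgt hcard
    -- facts about subtrees at neighbors z ≠ y of x
    have subtree_facts : ∀ z, G.Adj x z → z ≠ y →
        side G s(x, z) z ⊆ (side G s(x, y) x).erase x ∧
        (∑ v ∈ side G s(x, z) z, ω v) < W - B := by
      intro z hxz hzy
      have hsub : side G s(x, z) z ⊆ (side G s(x, y) x).erase x := by
        intro u hu
        obtain ⟨h1, h2⟩ := subtree_subset hac hxy hxz hzy (mem_side.mp hu)
        exact Finset.mem_erase.mpr ⟨h2, mem_side.mpr h1⟩
      refine ⟨hsub, ?_⟩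
      have hcardlt : (side G s(x, z) z).card < n₀ := by
        calc (side G s(x, z) z).card ≤ ((side G s(x, y) x).erase x).card :=
              Finset.card_le_card hsub
          _ < (side G s(x, y) x).card :=
              Finset.card_erase_lt_of_mem (self_mem_side _ _)
          _ = n₀ := hcard
      have hnotbig : ¬ (B < ∑ v ∈ side G s(x, z) z, ω v) := by
        intro hb
        exact hmin _ hcardlt ⟨s(x, z), (SimpleGraph.mem_edgeSet _).mpr hxz, z, hb, rfl⟩
      -- the heavy side of edge s(x,z) must be the x-side
      obtain ⟨w', hw'⟩ := key s(x, z) ((SimpleGraph.mem_edgeSet _).mpr hxz)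
      rcases reach_cover hc x z w' with hr | hr
      · rw [side_congr hr] at hw'
        have hsplit := side_sum_split hac hc hxz ω
        push_neg at hnotbig
        linarith
      · rw [side_congr hr] at hw'
        exact absurd hw' hnotbig
    -- analyze the neighbors of x other than y
    set N := G.neighborFinset x with hN
    have hyN : y ∈ N := by rw [hN, SimpleGraph.mem_neighborFinset]; exact hxy
    set M := N.erase y with hM
    have hMadj : ∀ z ∈ M, G.Adj x z ∧ z ≠ y := by
      intro z hz
      rw [hM, Finset.mem_erase, hN, SimpleGraph.mem_neighborFinset] at hz
      exact ⟨hz.2, hz.1⟩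
    have hNdeg : N.card = G.degree x := rfl
    have hMcard : M.card = G.degree x - 1 := by
      rw [hM, Finset.card_erase_of_mem hyN, hNdeg]
    have hdegpos : 1 ≤ G.degree x := by
      rw [← hNdeg]
      exact Finset.card_pos.mpr ⟨y, hyN⟩
    have hM2 : M.card ≤ 2 := by
      have := hdeg x
      omega
    -- membership decomposition of the heavy side
    have hdecomp : ∀ u ∈ side G s(x, y) x, u = x ∨ ∃ z ∈ M,
        u ∈ side G s(x, z) z := by
      intro u hu
      by_cases hux : u = x
      · exact Or.inl hux
      · obtain ⟨z, hz1, hz2, hz3⟩ := reach_decomp hxy (mem_side.mp hu) hux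
        refine Or.inr ⟨z, ?_, mem_side.mpr hz3⟩
        rw [hM, Finset.mem_erase, hN, SimpleGraph.mem_neighborFinset]
        exact ⟨hz2, hz1⟩
    have hMcases : M.card = 0 ∨ M.card = 1 ∨ M.card = 2 := by omega
    rcases hMcases with hMc | hMc | hMc
    · -- degree 1 : the heavy side is {x}
      have hMempty : M = ∅ := Finset.card_eq_zero.mp hMc
      have hside : side G s(x, y) x = {x} := by
        apply Finset.eq_singleton_iff_unique_mem.mpr
        refine ⟨self_mem_side _ _, ?_⟩
        intro u hu
        rcases hdecomp u hu with h | ⟨z, hz, _⟩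
        · exact h
        · rw [hMempty] at hz; exact absurd hz (Finset.notMem_empty z)
      rw [hside, Finset.sum_singleton] at hgt
      have h1 := hω1 x
      rw [hBdef] at hgt
      linarith
    · -- degree 2
      obtain ⟨z, hz⟩ := Finset.card_eq_one.mp hMc
      have hzM : z ∈ M := by rw [hz]; exact Finset.mem_singleton_self z
      obtain ⟨hxz, hzy⟩ := hMadj z hzM
      obtain ⟨hsub, hslt⟩ := subtree_facts z hxz hzy
      have hxnot : x ∉ side G s(x, z) z := by
        intro hx
        exact (Finset.mem_erase.mp (hsub hx)).1 rfl
      have hside : side G s(x, y) x = insert x (side G s(x, z) z) := by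
        ext u
        rw [Finset.mem_insert]
        constructor
        · intro hu
          rcases hdecomp u hu with h | ⟨z', hz', hu'⟩
          · exact Or.inl h
          · rw [hz, Finset.mem_singleton] at hz'
            subst hz'
            exact Or.inr hu'
        · rintro (rfl | hu)
          · exact self_mem_side _ _
          · exact Finset.mem_of_mem_erase (hsub hu)
      rw [hside, Finset.sum_insert hxnot] at hgt
      have hdx : 2 ≤ G.degree x := by omega
      have h2 := hω2 x hdx
      rw [hBdef] at hgt hslt
      linarith
    · -- degree 3
      obtain ⟨z₁, z₂, hz12, hz⟩ := Finset.card_eq_two.mp hMc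
      have hz1M : z₁ ∈ M := by rw [hz]; exact Finset.mem_insert_self _ _
      have hz2M : z₂ ∈ M := by
        rw [hz]; exact Finset.mem_insert_of_mem (Finset.mem_singleton_self _)
      obtain ⟨hxz1, hz1y⟩ := hMadj z₁ hz1M
      obtain ⟨hxz2, hz2y⟩ := hMadj z₂ hz2M
      obtain ⟨hsub1, hslt1⟩ := subtree_facts z₁ hxz1 hz1y
      obtain ⟨hsub2, hslt2⟩ := subtree_facts z₂ hxz2 hz2y
      have hxnot1 : x ∉ side G s(x, z₁) z₁ := fun hx =>
        (Finset.mem_erase.mp (hsub1 hx)).1 rfl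
      have hxnot2 : x ∉ side G s(x, z₂) z₂ := fun hx =>
        (Finset.mem_erase.mp (hsub2 hx)).1 rfl
      have hdisj : Disjoint (side G s(x, z₁) z₁) (side G s(x, z₂) z₂) := by
        rw [Finset.disjoint_left]
        intro u hu1 hu2
        exact subtree_disjoint hac hxz1 hxz2 hz12 (mem_side.mp hu1) (mem_side.mp hu2)
      have hside : side G s(x, y) x
          = insert x (side G s(x, z₁) z₁ ∪ side G s(x, z₂) z₂) := by
        ext u
        rw [Finset.mem_insert, Finset.mem_union]
        constructor
        · intro hu
          rcases hdecomp u hu with h | ⟨z', hz', hu'⟩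
          · exact Or.inl h
          · rw [hz, Finset.mem_insert, Finset.mem_singleton] at hz'
            rcases hz' with rfl | rfl
            · exact Or.inr (Or.inl hu')
            · exact Or.inr (Or.inr hu')
        · rintro (rfl | hu | hu)
          · exact self_mem_side _ _
          · exact Finset.mem_of_mem_erase (hsub1 hu)
          · exact Finset.mem_of_mem_erase (hsub2 hu)
      have hxnotU : x ∉ side G s(x, z₁) z₁ ∪ side G s(x, z₂) z₂ := by
        rw [Finset.mem_union]
        rintro (h | h)
        · exact hxnot1 h
        · exact hxnot2 h
      rw [hside, Finset.sum_insert hxnotU, Finset.sum_union hdisj] at hgt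
      have hdx : G.degree x = 3 := by omega
      have h3 := hγ x hdx
      rw [hBdef] at hgt hslt1 hslt2
      linarith
  -- apply the main step to the chosen minimal heavy side
  revert he hwB hwcard
  induction e using Sym2.ind with
  | _ a b =>
    intro he hwB hwcard
    have hadj : G.Adj a b := (SimpleGraph.mem_edgeSet _).mp he
    rcases reach_cover hc a b w with hr | hr
    · rw [side_congr hr] at hwB hwcard
      exact main a b hadj hwB hwcard
    · rw [side_congr hr] at hwB hwcard
      rw [Sym2.eq_swap (a := a) (b := b)] at hwB hwcard
      exact main b a hadj.symm hwB hwcard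
end

section
/- Let T be a quasi-binary tree with |V(T)| > 1 and total weight ω(T) > 0, and let γ ∈ ℝ with γ ≥ ω₃. If ω(T) ≥ max{ (3ω₁ − γ)/2 , 3ω₂ − 2γ }, then ω(T) ≥ −2γ. -/
open scoped Classical

theorem aux_degree_pos {V : Type*} [Fintype V] (G : SimpleGraph V)
    (hT : G.IsTree) (hn : 1 < Fintype.card V) (v : V) : 0 < G.degree v := by
  obtain ⟨u, hu⟩ := Fintype.exists_ne_of_one_lt_card hn v
  obtain ⟨p⟩ := hT.isConnected.preconnected v u
  have hnil : ¬ p.Nil := SimpleGraph.Walk.not_nil_of_ne (Ne.symm hu)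
  rw [SimpleGraph.degree_pos_iff_exists_adj]
  exact ⟨p.getVert 1, p.adj_snd hnil⟩

/-- Let `T` be a quasi-binary tree (a tree all of whose degrees are at most 3) with
more than one vertex and positive total weight, and let `γ ≥ ω₃`.  If
`ω(T) ≥ max{(3ω₁ - γ)/2, 3ω₂ - 2γ}`, then `ω(T) ≥ -2γ`. -/
theorem total_weight_ge_neg_two_gamma {V : Type*} [Fintype V]
    (G : SimpleGraph V) (hT : G.IsTree) (hdeg : ∀ v, G.degree v ≤ 3)
    (ω : V → ℝ) (hn : 1 < Fintype.card V) (hpos : 0 < ∑ v, ω v)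
    (γ : ℝ) (hγ : ∀ v, G.degree v = 3 → ω v ≤ γ)
    (hω1 : ∀ v : V, (3 * ω v - γ) / 2 ≤ ∑ u, ω u)
    (hω2 : ∀ v : V, 2 ≤ G.degree v → 3 * ω v - 2 * γ ≤ ∑ u, ω u) :
    -2 * γ ≤ ∑ v, ω v := by
  classical
  set S : ℝ := ∑ v, ω v with hS
  -- per-vertex bound: 3 ω(v) ≤ 3 S + deg(v) (γ - S)
  have key : ∀ v : V, 3 * ω v ≤ 3 * S + (G.degree v : ℝ) * (γ - S) := by
    intro v
    have h1 := aux_degree_pos G hT hn v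
    have h3 := hdeg v
    have hd : G.degree v = 1 ∨ G.degree v = 2 ∨ G.degree v = 3 := by omega
    rcases hd with h | h | h
    · have := hω1 v
      rw [h]; push_cast; linarith
    · have := hω2 v (by omega)
      rw [h]; push_cast; linarith
    · have := hγ v h
      rw [h]; push_cast; linarith
  -- sum of degrees is 2(n-1)
  have hedge : G.edgeFinset.card + 1 = Fintype.card V := hT.card_edgeFinset
  have hhand : ∑ v, G.degree v = 2 * G.edgeFinset.card :=
    G.sum_degrees_eq_twice_card_edges
  have hnat : ∑ v, G.degree v + 2 = 2 * Fintype.card V := by omega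
  have hD : ∑ v, (G.degree v : ℝ) = 2 * (Fintype.card V : ℝ) - 2 := by
    have := congrArg (fun k : ℕ => (k : ℝ)) hnat
    push_cast at this
    linarith
  -- sum the per-vertex bound
  have hsum : 3 * S ≤ (Fintype.card V : ℝ) * (3 * S)
      + (2 * (Fintype.card V : ℝ) - 2) * (γ - S) := by
    calc 3 * S = ∑ v, 3 * ω v := by rw [hS, Finset.mul_sum]
      _ ≤ ∑ v, (3 * S + (G.degree v : ℝ) * (γ - S)) :=
          Finset.sum_le_sum fun v _ => key v
      _ = (Fintype.card V : ℝ) * (3 * S) + (2 * (Fintype.card V : ℝ) - 2) * (γ - S) := by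
          rw [Finset.sum_add_distrib, Finset.sum_const, ← Finset.sum_mul, hD]
          simp [nsmul_eq_mul]
  have hn2 : (2 : ℝ) ≤ (Fintype.card V : ℝ) := by exact_mod_cast hn
  -- conclude: (n-1)(S + 2γ) ≥ 0 and n - 1 > 0
  by_contra h
  push_neg at h
  nlinarith [hsum, hn2, h]
end

section
/- For every integer k ≥ 2 and all real numbers ω' ≥ ω > 0, there exist a quasi-binary tree T and a weight function on V(T) such that: every vertex of degree 3 has weight at most ω (so one may take γ = ω ≥ ω₃); the total weight is ω(T) = (k−1)ω + (2k−1)ω'; the hypotheses of the lower-bound theorem hold, i.e. ω(T) ≥ max{ ((2k−1)/2)·ω₁ − (1/2)·γ , (2k−1)·ω₂ − k·γ }; and β_k(T) = ω' = (ω(T) − (k−1)γ)/(2k−1). Hence the lower bound β_k(T) ≥ (ω(T) − (k−1)γ)/(2k−1) is attained with equality, and is therefore optimal. -/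
open scoped Classical

open SimpleGraph


/-- Graph generated by a parent function. -/
def pGraph {n : ℕ} (p : Fin n → Fin n) : SimpleGraph (Fin n) where
  Adj u v := u ≠ v ∧ (p u = v ∨ p v = u)
  symm := by
    constructor
    intro u v ⟨h1, h2⟩
    exact ⟨h1.symm, h2.symm⟩
  loopless := by constructor; intro u h; exact h.1 rfl

section Parent

variable {n : ℕ} {p : Fin n → Fin n} {r : Fin n}
  (hr : p r = r) (hp : ∀ v, v ≠ r → (p v).val < v.val)

include hr hp in
lemma pGraph_reach (v : Fin n) : (pGraph p).Reachable v r := by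
  suffices h : ∀ N, ∀ v : Fin n, v.val < N → (pGraph p).Reachable v r from h n v v.isLt
  intro N
  induction N with
  | zero => intro v hv; omega
  | succ N ih =>
    intro v hv
    by_cases hvr : v = r
    · exact hvr ▸ Reachable.refl _
    · have hlt := hp v hvr
      have hadj : (pGraph p).Adj v (p v) := by
        refine ⟨?_, Or.inl rfl⟩
        intro h
        rw [← h] at hlt
        omega
      exact (hadj.reachable).trans (ih (p v) (by omega))

include hr hp in
lemma pGraph_connected (hn : 0 < n) : (pGraph p).Connected := by
  have : Nonempty (Fin n) := ⟨⟨0, hn⟩⟩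
  refine ⟨fun u v => ?_⟩
  exact (pGraph_reach hr hp u).trans (pGraph_reach hr hp v).symm

include hr hp in
lemma pGraph_iter_le (t : ℕ) (u : Fin n) : (p^[t] u).val ≤ u.val := by
  induction t with
  | zero => simp
  | succ t ih =>
    rw [Function.iterate_succ_apply']
    by_cases h : p^[t] u = r
    · rw [h, hr]; rw [h] at ih; exact ih
    · exact le_of_lt (lt_of_lt_of_le (hp _ h) ih)

include hr hp in
lemma pGraph_acyclic : (pGraph p).IsAcyclic := by
  rw [isAcyclic_iff_forall_adj_isBridge]
  -- it suffices to handle the edge (c, p c) with c ≠ r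
  have key : ∀ c : Fin n, c ≠ p c → (pGraph p).IsBridge s(c, p c) := by
    intro c hc
    have hcr : c ≠ r := by
      intro h; rw [h, hr] at hc; exact hc rfl
    rw [isBridge_iff, ← and_iff_right (a := (pGraph p).Adj c (p c))
      (b := ¬((pGraph p).deleteEdges {s(c, p c)}).Reachable c (p c)) ⟨hc, Or.inl rfl⟩]
    constructor
    · exact ⟨hc, Or.inl rfl⟩
    · -- descendant invariant
      set D : Fin n → Prop := fun u => ∃ t, p^[t] u = c with hD
      have hinv : ∀ a b : Fin n, ((pGraph p) \ fromEdgeSet {s(c, p c)}).Adj a b →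
          (D a ↔ D b) := by
        have main : ∀ a b : Fin n, a ≠ c →
            p a = b → (D a ↔ D b) := by
          intro a b hac hpa
          constructor
          · rintro ⟨t, ht⟩
            cases t with
            | zero => exact absurd ht hac
            | succ t =>
              rw [Function.iterate_succ_apply, hpa] at ht
              exact ⟨t, ht⟩
          · rintro ⟨t, ht⟩
            exact ⟨t + 1, by rw [Function.iterate_succ_apply, hpa]; exact ht⟩
        intro a b hab
        rw [sdiff_adj, fromEdgeSet_adj] at hab
        obtain ⟨hadj, hne⟩ := hab
        have hne' : s(a, b) ∉ ({s(c, p c)} : Set (Sym2 (Fin n))) := by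
          intro h
          simp only [Set.mem_singleton_iff] at h
          exact hne ⟨h, hadj.ne⟩
        rcases hadj.2 with h | h
        · refine main a b ?_ h
          rintro rfl
          exact hne' (by rw [← h]; exact Set.mem_singleton _)
        · have hbc : b ≠ c := by
            rintro rfl
            refine hne' ?_
            rw [← h, Sym2.eq_swap]
            exact Set.mem_singleton _
          exact (main b a hbc h).symm
      have htrans : ∀ x y : Fin n, ((pGraph p) \ fromEdgeSet {s(c, p c)}).Reachable x y →
          (D x ↔ D y) := by
        intro x y ⟨w⟩
        induction w with
        | nil => exact Iff.rfl
        | cons h _ ih => exact (hinv _ _ h).trans ih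
      intro hre
      have hDc : D c := ⟨0, rfl⟩
      have hDpc : ¬ D (p c) := by
        rintro ⟨t, ht⟩
        have h1 := pGraph_iter_le hr hp t (p c)
        rw [ht] at h1
        have h2 := hp c hcr
        omega
      exact hDpc ((htrans _ _ hre).mp hDc)
  intro v w hadj
  rcases hadj.2 with h | h
  · have := key v (by rw [h]; exact hadj.ne)
    rwa [h] at this
  · have := key w (by rw [h]; exact hadj.ne.symm)
    rw [h] at this
    rwa [Sym2.eq_swap] at this

include hr hp in
lemma pGraph_isTree (hn : 0 < n) : (pGraph p).IsTree :=
  ⟨pGraph_connected hr hp hn, pGraph_acyclic hr hp⟩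

end Parent

section Caterpillar

variable (m : ℕ)

/-- vertex with value `a` (mod n). -/
def fv (a : ℕ) : Fin (3*m+1) := ⟨a % (3*m+1), Nat.mod_lt _ (by omega)⟩

lemma fv_val {a : ℕ} (h : a < 3*m+1) : (fv m a).val = a := Nat.mod_eq_of_lt h

/-- parent function of the caterpillar tree. -/
def pf (v : Fin (3*m+1)) : Fin (3*m+1) :=
  if h : v.val ≤ 2*m then ⟨v.val - 1, by have := v.isLt; omega⟩
  else ⟨2*(v.val - (2*m+1)) + 1, by have := v.isLt; omega⟩

lemma pf_val_le {v : Fin (3*m+1)} (h : v.val ≤ 2*m) : (pf m v).val = v.val - 1 := by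
  simp [pf, dif_pos h]

lemma pf_val_gt {v : Fin (3*m+1)} (h : ¬ v.val ≤ 2*m) : (pf m v).val = 2*(v.val - (2*m+1)) + 1 := by
  simp [pf, dif_neg h]

lemma adj_iff (u v : Fin (3*m+1)) : (pGraph (pf m)).Adj u v ↔
    ((1 ≤ u.val ∧ u.val ≤ 2*m ∧ v.val = u.val - 1) ∨
     (1 ≤ v.val ∧ v.val ≤ 2*m ∧ u.val = v.val - 1) ∨
     (2*m+1 ≤ u.val ∧ v.val = 2*(u.val - (2*m+1)) + 1) ∨
     (2*m+1 ≤ v.val ∧ u.val = 2*(v.val - (2*m+1)) + 1)) := by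
  have hv := v.isLt
  have hu := u.isLt
  constructor
  · rintro ⟨hne, h | h⟩
    · have hne' : u.val ≠ v.val := fun h' => hne (Fin.ext h')
      by_cases hle : u.val ≤ 2*m
      · have := pf_val_le m hle
        rw [h] at this
        left; omega
      · have := pf_val_gt m hle
        rw [h] at this
        right; right; left; omega
    · have hne' : u.val ≠ v.val := fun h' => hne (Fin.ext h')
      by_cases hle : v.val ≤ 2*m
      · have := pf_val_le m hle
        rw [h] at this
        right; left; omega
      · have := pf_val_gt m hle
        rw [h] at this
        right; right; right; omega
  · intro h
    rcases h with ⟨h1, h2, h3⟩ | ⟨h1, h2, h3⟩ | ⟨h1, h2⟩ | ⟨h1, h2⟩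
    · exact ⟨fun he => by rw [he] at h3 ; omega, Or.inl (Fin.ext (by rw [pf_val_le m h2]; omega))⟩
    · exact ⟨fun he => by rw [he] at h3 ; omega, Or.inr (Fin.ext (by rw [pf_val_le m h2]; omega))⟩
    · exact ⟨fun he => by rw [he] at h2 ; omega, Or.inl (Fin.ext (by rw [pf_val_gt m (by omega)]; omega))⟩
    · exact ⟨fun he => by rw [he] at h2 ; omega, Or.inr (Fin.ext (by rw [pf_val_gt m (by omega)]; omega))⟩

lemma caterpillar_isTree : (pGraph (pf m)).IsTree := by
  refine pGraph_isTree (r := fv m 0) ?_ ?_ (by omega)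
  · apply Fin.ext
    rw [pf_val_le m (by rw [fv_val m (by omega)]; omega), fv_val m (by omega)]
  · intro v hv
    have hval : v.val ≠ 0 := by
      intro h
      exact hv (Fin.ext (by rw [h, fv_val m (by omega)]))
    have := v.isLt
    by_cases hle : v.val ≤ 2*m
    · rw [pf_val_le m hle]; omega
    · rw [pf_val_gt m hle]; omega

end Caterpillar

section Degrees

variable (m : ℕ)

lemma card_triple_le {N : ℕ} (a b c : Fin N) : ({a, b, c} : Finset (Fin N)).card ≤ 3 := by
  classical
  refine le_trans (Finset.card_insert_le _ _) ?_
  refine Nat.succ_le_succ (le_trans (Finset.card_insert_le _ _) ?_)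
  simp

lemma card_pair_le {N : ℕ} (a b : Fin N) : ({a, b} : Finset (Fin N)).card ≤ 2 := by
  classical
  refine le_trans (Finset.card_insert_le _ _) ?_
  simp

lemma nbhd_le (v : Fin (3*m+1)) (hle : v.val ≤ 2*m) :
    (pGraph (pf m)).neighborFinset v ⊆
      {fv m (v.val+1), fv m (v.val-1), fv m (2*m+1+(v.val-1)/2)} := by
  intro u hu
  rw [SimpleGraph.mem_neighborFinset, adj_iff] at hu
  have hv := v.isLt
  have hu' := u.isLt
  simp only [Finset.mem_insert, Finset.mem_singleton]
  rcases hu with ⟨h1, h2, h3⟩ | ⟨h1, h2, h3⟩ | ⟨h1, h2⟩ | ⟨h1, h2⟩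
  · right; left; exact Fin.ext (by rw [fv_val m (by omega)]; omega)
  · left; exact Fin.ext (by rw [fv_val m (by omega)]; omega)
  · omega
  · right; right; exact Fin.ext (by rw [fv_val m (by omega)]; omega)

lemma nbhd_le_even (v : Fin (3*m+1)) (hle : v.val ≤ 2*m) (hev : v.val % 2 = 0) :
    (pGraph (pf m)).neighborFinset v ⊆ {fv m (v.val+1), fv m (v.val-1)} := by
  intro u hu
  rw [SimpleGraph.mem_neighborFinset, adj_iff] at hu
  have hv := v.isLt
  have hu' := u.isLt
  simp only [Finset.mem_insert, Finset.mem_singleton]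
  rcases hu with ⟨h1, h2, h3⟩ | ⟨h1, h2, h3⟩ | ⟨h1, h2⟩ | ⟨h1, h2⟩
  · right; exact Fin.ext (by rw [fv_val m (by omega)]; omega)
  · left; exact Fin.ext (by rw [fv_val m (by omega)]; omega)
  · omega
  · omega

lemma nbhd_le_leaf (v : Fin (3*m+1)) (hle : ¬ v.val ≤ 2*m) :
    (pGraph (pf m)).neighborFinset v ⊆ {fv m (2*(v.val - (2*m+1))+1)} := by
  intro u hu
  rw [SimpleGraph.mem_neighborFinset, adj_iff] at hu
  have hv := v.isLt
  have hu' := u.isLt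
  simp only [Finset.mem_singleton]
  rcases hu with ⟨h1, h2, h3⟩ | ⟨h1, h2, h3⟩ | ⟨h1, h2⟩ | ⟨h1, h2⟩
  · omega
  · omega
  · exact Fin.ext (by rw [fv_val m (by omega)]; omega)
  · omega

lemma degree_le_three (v : Fin (3*m+1)) : (pGraph (pf m)).degree v ≤ 3 := by
  rw [← SimpleGraph.card_neighborFinset_eq_degree]
  by_cases hle : v.val ≤ 2*m
  · exact le_trans (Finset.card_le_card (nbhd_le m v hle)) (card_triple_le _ _ _)
  · exact le_trans (Finset.card_le_card (nbhd_le_leaf m v hle)) (by simp)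

lemma degree_le_two (v : Fin (3*m+1)) (h : ¬ (v.val % 2 = 1 ∧ v.val ≤ 2*m)) :
    (pGraph (pf m)).degree v ≤ 2 := by
  rw [← SimpleGraph.card_neighborFinset_eq_degree]
  by_cases hle : v.val ≤ 2*m
  · have hev : v.val % 2 = 0 := by omega
    exact le_trans (Finset.card_le_card (nbhd_le_even m v hle hev)) (card_pair_le _ _)
  · exact le_trans (Finset.card_le_card (nbhd_le_leaf m v hle)) (by simp)

end Degrees

section Weights

lemma card_odd_range (M : ℕ) : ((Finset.range M).filter (fun j => j % 2 = 1)).card = M / 2 := by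
  induction M with
  | zero => simp
  | succ M ih =>
    rw [Finset.range_add_one, Finset.filter_insert]
    by_cases h : M % 2 = 1
    · rw [if_pos h, Finset.card_insert_of_notMem (by simp), ih]
      omega
    · rw [if_neg h, ih]
      omega

lemma weight_sum (m : ℕ) (ω ω' : ℝ) :
    (∑ v : Fin (3*m+1), if v.val % 2 = 1 ∧ v.val ≤ 2*m then ω else ω')
      = m * ω + (2*m+1) * ω' := by
  classical
  have h := Fin.sum_univ_eq_sum_range (fun j => if j % 2 = 1 ∧ j ≤ 2*m then ω else ω') (3*m+1)
  rw [h, Finset.sum_ite, Finset.sum_const, Finset.sum_const]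
  have hfl : (Finset.range (3*m+1)).filter (fun j => j % 2 = 1 ∧ j ≤ 2*m)
      = (Finset.range (2*m+1)).filter (fun j => j % 2 = 1) := by
    ext j
    simp only [Finset.mem_filter, Finset.mem_range]
    omega
  have hc1 : ((Finset.range (3*m+1)).filter (fun j => j % 2 = 1 ∧ j ≤ 2*m)).card = m := by
    rw [hfl, card_odd_range]; omega
  have hc2 : ((Finset.range (3*m+1)).filter (fun j => ¬(j % 2 = 1 ∧ j ≤ 2*m))).card = 2*m+1 := by
    have := Finset.card_filter_add_card_filter_not
      (s := Finset.range (3*m+1)) (p := fun j => j % 2 = 1 ∧ j ≤ 2*m)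
    rw [Finset.card_range] at this
    omega
  rw [hc1, hc2]
  push_cast [nsmul_eq_mul]
  ring

end Weights

section Separators

lemma isolated_compWeight {V : Type*} [Fintype V] (H : SimpleGraph V) (ωf : V → ℝ) (v : V)
    (h : ∀ u, ¬ H.Adj v u) :
    compWeight H ωf (H.connectedComponentMk v) = ωf v := by
  rw [compWeight]
  have hfil : Finset.univ.filter
      (fun u => H.connectedComponentMk u = H.connectedComponentMk v) = {v} := by
    ext u
    simp only [Finset.mem_filter, Finset.mem_univ, true_and, Finset.mem_singleton]
    constructor
    · intro hu
      have hr : H.Reachable v u := ((SimpleGraph.ConnectedComponent.eq).mp hu).symm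
      obtain ⟨w⟩ := hr
      cases w with
      | nil => rfl
      | cons hadj _ => exact absurd hadj (h _)
    · rintro rfl; rfl
  rw [hfil, Finset.sum_singleton]

lemma le_compWeight {V : Type*} [Fintype V] (H : SimpleGraph V) (ωf : V → ℝ)
    (hpos : ∀ u, 0 ≤ ωf u) (w : V) (c : H.ConnectedComponent)
    (hc : H.connectedComponentMk w = c) : ωf w ≤ compWeight H ωf c := by
  rw [compWeight]
  exact Finset.single_le_sum (fun u _ => hpos u) (by simp [hc])

/-- the good `k`-separator -/
def sep (m : ℕ) : Finset (Sym2 (Fin (3*m+1))) :=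
  (Finset.range m).image (fun i => s(fv m (2*i+1), fv m (2*i+2)))

lemma sep_subset (m : ℕ) : ↑(sep m) ⊆ (pGraph (pf m)).edgeSet := by
  intro e he
  simp only [sep, Finset.coe_image, Set.mem_image, Finset.mem_coe, Finset.mem_range] at he
  obtain ⟨i, hi, rfl⟩ := he
  rw [SimpleGraph.mem_edgeSet, adj_iff]
  right; left
  rw [fv_val m (by omega), fv_val m (by omega)]
  omega

lemma sep_card (m : ℕ) : (sep m).card = m := by
  rw [sep, Finset.card_image_of_injOn, Finset.card_range]
  intro i hi j hj h
  simp only [Finset.mem_coe, Finset.mem_range] at hi hj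
  have v1 : (fv m (2*i+1)).val = 2*i+1 := fv_val m (by omega)
  have v2 : (fv m (2*i+2)).val = 2*i+2 := fv_val m (by omega)
  have v3 : (fv m (2*j+1)).val = 2*j+1 := fv_val m (by omega)
  have v4 : (fv m (2*j+2)).val = 2*j+2 := fv_val m (by omega)
  rw [Sym2.eq_iff] at h
  rcases h with ⟨h1, h2⟩ | ⟨h1, h2⟩ <;>
    [(have e1 := congrArg Fin.val h1; have e2 := congrArg Fin.val h2);
     (have e1 := congrArg Fin.val h1; have e2 := congrArg Fin.val h2)] <;>
    rw [v1] at e1 <;> [rw [v3] at e1; rw [v4] at e1] <;> omega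

/-- weight function -/
noncomputable def wt (m : ℕ) (ω ω' : ℝ) (v : Fin (3*m+1)) : ℝ :=
  if v.val % 2 = 1 ∧ v.val ≤ 2*m then ω else ω'

lemma wt_nonneg (m : ℕ) (ω ω' : ℝ) (hωpos : 0 < ω) (hωω' : ω ≤ ω') (u : Fin (3*m+1)) :
    0 ≤ wt m ω ω' u := by
  rw [wt]; split <;> linarith

lemma wt_eq_of_not (m : ℕ) (ω ω' : ℝ) {u : Fin (3*m+1)} (h : ¬(u.val % 2 = 1 ∧ u.val ≤ 2*m)) :
    wt m ω ω' u = ω' := if_neg h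

lemma sep_lower (m : ℕ) (ω ω' : ℝ) (hωpos : 0 < ω) (hωω' : ω ≤ ω')
    (c : ((pGraph (pf m)).deleteEdges ↑(sep m)).ConnectedComponent) :
    ω' ≤ compWeight ((pGraph (pf m)).deleteEdges ↑(sep m)) (wt m ω ω') c := by
  obtain ⟨v, hv0⟩ := c.exists_rep
  by_cases hv : v.val % 2 = 1 ∧ v.val ≤ 2*m
  · -- v is an odd spine vertex; its predecessor has weight ω'
    have hwval : (fv m (v.val - 1)).val = v.val - 1 := fv_val m (by have := v.isLt; omega)
    have hadj : ((pGraph (pf m)).deleteEdges ↑(sep m)).Adj v (fv m (v.val - 1)) := by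
      rw [SimpleGraph.deleteEdges_adj]
      constructor
      · rw [adj_iff]; left; omega
      · intro hmem
        simp only [sep, Finset.coe_image, Set.mem_image, Finset.mem_coe,
          Finset.mem_range] at hmem
        obtain ⟨j, hj, hjeq⟩ := hmem
        have v1 : (fv m (2*j+1)).val = 2*j+1 := fv_val m (by omega)
        have v2 : (fv m (2*j+2)).val = 2*j+2 := fv_val m (by omega)
        rw [Sym2.eq_iff] at hjeq
        rcases hjeq with ⟨h1, h2⟩ | ⟨h1, h2⟩ <;>
          (have e1 := congrArg Fin.val h1; have e2 := congrArg Fin.val h2) <;>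
          rw [v1] at e1 <;> rw [v2] at e2 <;> omega
    have hcomp : ((pGraph (pf m)).deleteEdges ↑(sep m)).connectedComponentMk (fv m (v.val - 1)) = c := by
      rw [← hv0]
      exact (SimpleGraph.ConnectedComponent.connectedComponentMk_eq_of_adj hadj).symm
    have hle := le_compWeight _ (wt m ω ω') (wt_nonneg m ω ω' hωpos hωω') _ _ hcomp
    rwa [wt_eq_of_not m ω ω' (by omega)] at hle
  · have hle := le_compWeight _ (wt m ω ω') (wt_nonneg m ω ω' hωpos hωω') _ _ hv0
    rwa [wt_eq_of_not m ω ω' hv] at hle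

end Separators

section Upper

lemma pair_inter_card_le {α : Type*} [DecidableEq α] (F : Finset α) (x y : α)
    (h : ¬(x ∈ F ∧ y ∈ F)) : (F ∩ {x, y}).card ≤ 1 := by
  by_cases hx : x ∈ F
  · have hy : y ∉ F := fun hy => h ⟨hx, hy⟩
    have hss : F ∩ {x, y} ⊆ {x} := by
      intro e he
      rw [Finset.mem_inter, Finset.mem_insert, Finset.mem_singleton] at he
      rcases he.2 with rfl | rfl
      · exact Finset.mem_singleton_self _
      · exact absurd he.1 hy
    exact (Finset.card_le_card hss).trans (by simp)
  · have hss : F ∩ {x, y} ⊆ {y} := by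
      intro e he
      rw [Finset.mem_inter, Finset.mem_insert, Finset.mem_singleton] at he
      rcases he.2 with rfl | rfl
      · exact absurd he.1 hx
      · exact Finset.mem_singleton_self _
    exact (Finset.card_le_card hss).trans (by simp)

lemma sep_upper (m : ℕ) (hm : 1 ≤ m) (F : Finset (Sym2 (Fin (3*m+1))))
    (hsub : ↑F ⊆ (pGraph (pf m)).edgeSet) (hcard : F.card = m) :
    ∃ v : Fin (3*m+1), ¬(v.val % 2 = 1 ∧ v.val ≤ 2*m) ∧
      ∀ u, ¬((pGraph (pf m)).deleteEdges ↑F).Adj v u := by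
  classical
  by_contra hcon
  push_neg at hcon
  have hiso : ∀ v : Fin (3*m+1), ¬(v.val % 2 = 1 ∧ v.val ≤ 2*m) →
      ∃ u, (pGraph (pf m)).Adj v u ∧ s(v, u) ∉ F := by
    intro v hv
    obtain ⟨u, hu⟩ := hcon v (fun h1 => by omega)
    rw [SimpleGraph.deleteEdges_adj] at hu
    exact ⟨u, hu.1, fun hmem => hu.2 (Finset.mem_coe.mpr hmem)⟩
  -- every edge of F is a spine edge or a leaf edge
  have hdecode : ∀ e ∈ F, (∃ j, j < 2*m ∧ e = s(fv m j, fv m (j+1))) ∨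
      (∃ i, i < m ∧ e = s(fv m (2*i+1), fv m (2*m+1+i))) := by
    intro e he
    have hE := hsub (Finset.mem_coe.mpr he)
    induction e using Sym2.ind with
    | _ a b =>
      rw [SimpleGraph.mem_edgeSet, adj_iff] at hE
      have ha := a.isLt
      have hb := b.isLt
      rcases hE with ⟨h1, h2, h3⟩ | ⟨h1, h2, h3⟩ | ⟨h1, h2⟩ | ⟨h1, h2⟩
      · refine Or.inl ⟨b.val, by omega, ?_⟩
        rw [Sym2.eq_iff]
        right
        exact ⟨Fin.ext (by rw [fv_val m (by omega)] <;> omega),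
               Fin.ext (by rw [fv_val m (by omega)] <;> omega)⟩
      · refine Or.inl ⟨a.val, by omega, ?_⟩
        rw [Sym2.eq_iff]
        left
        exact ⟨Fin.ext (by rw [fv_val m (by omega)] <;> omega),
               Fin.ext (by rw [fv_val m (by omega)] <;> omega)⟩
      · refine Or.inr ⟨a.val - (2*m+1), by omega, ?_⟩
        rw [Sym2.eq_iff]
        right
        exact ⟨Fin.ext (by rw [fv_val m (by omega)] <;> omega),
               Fin.ext (by rw [fv_val m (by omega)] <;> omega)⟩
      · refine Or.inr ⟨b.val - (2*m+1), by omega, ?_⟩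
        rw [Sym2.eq_iff]
        left
        exact ⟨Fin.ext (by rw [fv_val m (by omega)] <;> omega),
               Fin.ext (by rw [fv_val m (by omega)] <;> omega)⟩
  -- no leaf edge is in F
  have hleaf : ∀ i, i < m → s(fv m (2*i+1), fv m (2*m+1+i)) ∉ F := by
    intro i hi hmem
    have hval : (fv m (2*m+1+i)).val = 2*m+1+i := fv_val m (by omega)
    obtain ⟨u, hadj, hnm⟩ := hiso (fv m (2*m+1+i)) (by rw [hval]; omega)
    rw [adj_iff] at hadj
    have hu := u.isLt
    have huval : u.val = 2*i+1 := by
      rcases hadj with ⟨h1, h2, h3⟩ | ⟨h1, h2, h3⟩ | ⟨h1, h2⟩ | ⟨h1, h2⟩ <;> omega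
    have hue : u = fv m (2*i+1) := Fin.ext (by rw [fv_val m (by omega)] <;> omega)
    apply hnm
    rw [hue, Sym2.eq_swap]
    exact hmem
  -- the first spine edge is not in F
  have hfirst : s(fv m 0, fv m 1) ∉ F := by
    intro hmem
    have hval : (fv m 0).val = 0 := fv_val m (by omega)
    obtain ⟨u, hadj, hnm⟩ := hiso (fv m 0) (by rw [hval]; omega)
    rw [adj_iff] at hadj
    have hu := u.isLt
    have huval : u.val = 1 := by
      rcases hadj with ⟨h1, h2, h3⟩ | ⟨h1, h2, h3⟩ | ⟨h1, h2⟩ | ⟨h1, h2⟩ <;> omega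
    have hue : u = fv m 1 := Fin.ext (by rw [fv_val m (by omega)] <;> omega)
    apply hnm
    rw [hue]
    exact hmem
  -- the last spine edge is not in F
  have hlast : s(fv m (2*m-1), fv m (2*m)) ∉ F := by
    intro hmem
    have hval : (fv m (2*m)).val = 2*m := fv_val m (by omega)
    obtain ⟨u, hadj, hnm⟩ := hiso (fv m (2*m)) (by rw [hval]; omega)
    rw [adj_iff] at hadj
    have hu := u.isLt
    have huval : u.val = 2*m-1 := by
      rcases hadj with ⟨h1, h2, h3⟩ | ⟨h1, h2, h3⟩ | ⟨h1, h2⟩ | ⟨h1, h2⟩ <;> omega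
    have hue : u = fv m (2*m-1) := Fin.ext (by rw [fv_val m (by omega)] <;> omega)
    apply hnm
    rw [hue, Sym2.eq_swap]
    exact hmem
  -- no two consecutive spine edges around an interior even vertex are both in F
  have hpairs : ∀ i, i < m-1 →
      ¬(s(fv m (2*i+1), fv m (2*i+2)) ∈ F ∧ s(fv m (2*i+2), fv m (2*i+3)) ∈ F) := by
    rintro i hi ⟨hm1, hm2⟩
    have hval : (fv m (2*i+2)).val = 2*i+2 := fv_val m (by omega)
    obtain ⟨u, hadj, hnm⟩ := hiso (fv m (2*i+2)) (by rw [hval]; omega)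
    rw [adj_iff] at hadj
    have hu := u.isLt
    have huval : u.val = 2*i+1 ∨ u.val = 2*i+3 := by
      rcases hadj with ⟨h1, h2, h3⟩ | ⟨h1, h2, h3⟩ | ⟨h1, h2⟩ | ⟨h1, h2⟩ <;> omega
    rcases huval with huval | huval
    · have hue : u = fv m (2*i+1) := Fin.ext (by rw [fv_val m (by omega)] <;> omega)
      apply hnm
      rw [hue, Sym2.eq_swap]
      exact hm1
    · have hue : u = fv m (2*i+3) := Fin.ext (by rw [fv_val m (by omega)] <;> omega)
      apply hnm
      rw [hue]
      exact hm2
  -- counting: F has at most m-1 elements, contradiction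
  have hsub2 : F ⊆ (Finset.range (m-1)).biUnion (fun i =>
      F ∩ {s(fv m (2*i+1), fv m (2*i+2)), s(fv m (2*i+2), fv m (2*i+3))}) := by
    intro e he
    rw [Finset.mem_biUnion]
    rcases hdecode e he with ⟨j, hj, rfl⟩ | ⟨i, hi, rfl⟩
    · have hj0 : j ≠ 0 := by rintro rfl; exact hfirst he
      have hj1 : j ≠ 2*m-1 := by
        rintro rfl
        have h21 : 2*m-1+1 = 2*m := by omega
        rw [h21] at he
        exact hlast he
      by_cases hpar : j % 2 = 1
      · obtain ⟨i, rfl⟩ : ∃ i, j = 2*i+1 := ⟨(j-1)/2, by omega⟩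
        refine ⟨i, Finset.mem_range.mpr (by omega), Finset.mem_inter.mpr ⟨he, ?_⟩⟩
        have h22 : 2*i+1+1 = 2*i+2 := by omega
        rw [h22]
        exact Finset.mem_insert_self _ _
      · obtain ⟨i, rfl⟩ : ∃ i, j = 2*i+2 := ⟨(j-2)/2, by omega⟩
        refine ⟨i, Finset.mem_range.mpr (by omega), Finset.mem_inter.mpr ⟨he, ?_⟩⟩
        have h23 : 2*i+2+1 = 2*i+3 := by omega
        rw [h23]
        exact Finset.mem_insert_of_mem (Finset.mem_singleton_self _)
    · exact absurd he (hleaf i hi)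
  have hcount : F.card ≤ m - 1 := by
    calc F.card ≤ ((Finset.range (m-1)).biUnion (fun i =>
        F ∩ {s(fv m (2*i+1), fv m (2*i+2)), s(fv m (2*i+2), fv m (2*i+3))})).card :=
          Finset.card_le_card hsub2
      _ ≤ ∑ i ∈ Finset.range (m-1),
            (F ∩ {s(fv m (2*i+1), fv m (2*i+2)), s(fv m (2*i+2), fv m (2*i+3))}).card :=
          Finset.card_biUnion_le
      _ ≤ ∑ _i ∈ Finset.range (m-1), 1 := by
          refine Finset.sum_le_sum (fun i hi => ?_)
          exact pair_inter_card_le F _ _ (hpairs i (Finset.mem_range.mp hi))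
      _ = m - 1 := by simp
  omega

end Upper


/-- **Tightness of the lower bound.** For every integer `k ≥ 2` and all reals
`ω' ≥ ω > 0`, there exist a quasi-binary tree `T` (a tree all of whose degrees are at
most 3) and a weight function `ωf` on its vertices such that: every vertex of degree 3
has weight at most `ω` (so one may take `γ = ω ≥ ω₃`); the total weight is
`ω(T) = (k-1)ω + (2k-1)ω'`; the hypotheses of the lower-bound theorem hold, i.e.
`ω(T) ≥ max{((2k-1)/2)·ω₁ - (1/2)·γ, (2k-1)·ω₂ - k·γ}`; and
`β_k(T) = ω' = (ω(T) - (k-1)γ)/(2k-1)`.  Here `β_k(T) = ω'` is expressed by: some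
`k`-separator has all its components of weight at least `ω'`, while every
`k`-separator has some component of weight at most `ω'`. -/
theorem beta_k_lower_bound_tight (k : ℕ) (hk : 2 ≤ k)
    (ω ω' : ℝ) (hωpos : 0 < ω) (hωω' : ω ≤ ω') :
    ∃ (n : ℕ) (G : SimpleGraph (Fin n)) (ωf : Fin n → ℝ),
      G.IsTree ∧ (∀ v, G.degree v ≤ 3) ∧ k ≤ n - 1 ∧
      -- every vertex of degree 3 has weight at most ω, so γ = ω ≥ ω₃
      (∀ v, G.degree v = 3 → ωf v ≤ ω) ∧
      -- the total weight
      (∑ v, ωf v) = ((k : ℝ) - 1) * ω + (2 * (k : ℝ) - 1) * ω' ∧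
      -- hypothesis ω(T) ≥ ((2k-1)/2)·ω₁ - (1/2)·γ with γ = ω
      (∀ v : Fin n, (2 * (k : ℝ) - 1) / 2 * ωf v - (1 / 2) * ω ≤ ∑ u, ωf u) ∧
      -- hypothesis ω(T) ≥ (2k-1)·ω₂ - k·γ with γ = ω
      (∀ v : Fin n, 2 ≤ G.degree v →
        (2 * (k : ℝ) - 1) * ωf v - (k : ℝ) * ω ≤ ∑ u, ωf u) ∧
      -- β_k(T) ≥ ω'
      (∃ F : Finset (Sym2 (Fin n)), ↑F ⊆ G.edgeSet ∧ F.card = k - 1 ∧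
        ∀ c : (G.deleteEdges ↑F).ConnectedComponent,
          ω' ≤ compWeight (G.deleteEdges ↑F) ωf c) ∧
      -- β_k(T) ≤ ω'
      (∀ F : Finset (Sym2 (Fin n)), ↑F ⊆ G.edgeSet → F.card = k - 1 →
        ∃ c : (G.deleteEdges ↑F).ConnectedComponent,
          compWeight (G.deleteEdges ↑F) ωf c ≤ ω') ∧
      -- the attained value equals the bound of the lower-bound theorem
      ω' = ((∑ v, ωf v) - ((k : ℝ) - 1) * ω) / (2 * (k : ℝ) - 1) := by
  
  set m := k - 1 with hm'
  have hm : 1 ≤ m := by omega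
  have hkm : k = m + 1 := by omega
  have hkR : (k : ℝ) = (m : ℝ) + 1 := by rw [hkm]; push_cast; ring
  have hmR : (1 : ℝ) ≤ (m : ℝ) := by exact_mod_cast hm
  refine ⟨3*m+1, pGraph (pf m), wt m ω ω', caterpillar_isTree m, degree_le_three m, by omega,
    ?_, ?_, ?_, ?_, ?_, ?_, ?_⟩
  · -- degree 3 implies weight ω
    intro v hdeg
    by_cases hv : v.val % 2 = 1 ∧ v.val ≤ 2*m
    · rw [wt, if_pos hv]
    · have := degree_le_two m v hv
      omega
  · -- total weight
    rw [show (∑ v, wt m ω ω' v) = ∑ v : Fin (3*m+1),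
        (if v.val % 2 = 1 ∧ v.val ≤ 2*m then ω else ω') from rfl,
      weight_sum m ω ω', hkR]
    push_cast
    ring
  · -- first hypothesis
    intro v
    rw [show (∑ u, wt m ω ω' u) = ∑ u : Fin (3*m+1),
        (if u.val % 2 = 1 ∧ u.val ≤ 2*m then ω else ω') from rfl,
      weight_sum m ω ω', hkR, wt]
    push_cast
    split <;> nlinarith [hmR, hωpos, hωω']
  · -- second hypothesis
    intro v _
    rw [show (∑ u, wt m ω ω' u) = ∑ u : Fin (3*m+1),
        (if u.val % 2 = 1 ∧ u.val ≤ 2*m then ω else ω') from rfl,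
      weight_sum m ω ω', hkR, wt]
    push_cast
    split <;> nlinarith [hmR, hωpos, hωω']
  · -- the good separator
    refine ⟨sep m, sep_subset m, by rw [sep_card], fun c => sep_lower m ω ω' hωpos hωω' c⟩
  · -- every separator has a light component
    intro F hsub hcard
    obtain ⟨v, hv, hviso⟩ := sep_upper m hm F hsub (by omega)
    refine ⟨((pGraph (pf m)).deleteEdges ↑F).connectedComponentMk v, ?_⟩
    rw [isolated_compWeight _ _ _ hviso, wt_eq_of_not m ω ω' hv]
  · -- the value of the bound
    rw [show (∑ v, wt m ω ω' v) = ∑ v : Fin (3*m+1),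
        (if v.val % 2 = 1 ∧ v.val ≤ 2*m then ω else ω') from rfl,
      weight_sum m ω ω', hkR]
    have h2m : (2 * ((m:ℝ) + 1) - 1) ≠ 0 := by nlinarith [hmR]
    field_simp
    ring
end
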